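/- arXiv:2406.02089 — 7 statements merged into one kernel-verified Lean document; each statement's English description precedes it below -/
import Mathlib

section
/- Let λ, K₁, K₂ > 0 and set ρ := λ/(2K₁K₂). Let k ≥ 0 and let g : [0,k] → ℝ be continuous and nonnegative, satisfying g(t) ≤ ρ e^{−λ(k−t)} + K₁K₂ ∫ₜᵏ e^{−λ(s−t)} g(s)² ds for all t ∈ [0,k]. Then g(t) ≤ (λ/(K₁K₂)) e^{−λ(k−t)} for all t ∈ [0,k]. -/
/-!
Write `K = K₁K₂` and `E(s) = exp (-λ(k - s))`. For `0 ≤ δ < 1` the barrier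
`B_δ = (λ/K) E/(δ + E)` solves the scalar Riccati equation `B' = λB - KB²` with
`B_δ(k) = λ/(K(1 + δ)) > λ/(2K)`, and substituting it into the right-hand side of the
integral inequality gives exactly `B_δ(t) - (λE(t)/2K)(1 - δ)/(1 + δ) < B_δ(t)`.
Hence `g < B_δ` on `[0, k]`: at the last time `t₀` with `g(t₀) ≥ B_δ(t₀)` we have `g < B_δ`
on `(t₀, k]`, so the inequality forces `g(t₀) < B_δ(t₀)`. Taking `δ = 1 - E(t)` makes
`B_δ(t) = (λ/K)E(t)`.
-/

open Set Real

theorem ContinuousOn.lt_on_Icc_of_backward_step {α β : Type*}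
    [LinearOrder α] [TopologicalSpace α] [OrderClosedTopology α] [CompactIccSpace α]
    [LinearOrder β] [TopologicalSpace β] [OrderClosedTopology β]
    {f g : α → β} {a b : α} (hf : ContinuousOn f (Icc a b)) (hg : ContinuousOn g (Icc a b))
    (step : ∀ t ∈ Icc a b, (∀ s ∈ Ioc t b, f s < g s) → f t < g t) :
    ∀ t ∈ Icc a b, f t < g t := by
  by_contra! ⟨t, ht, hgf⟩
  have hclosed : IsClosed {x ∈ Icc a b | g x ≤ f x} := isClosed_Icc.isClosed_le hg hf
  obtain ⟨t₀, ⟨ht₀, hgf₀⟩, hmax⟩ :=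
    (isCompact_Icc.of_isClosed_subset hclosed (sep_subset _ _)).exists_isGreatest ⟨t, ht, hgf⟩
  refine (step t₀ ht₀ fun s hs => ?_).not_ge hgf₀
  by_contra! hfg
  exact (hmax ⟨⟨ht₀.1.trans hs.1.le, hs.2⟩, hfg⟩).not_gt hs.1

noncomputable def riccatiBarrier (lam K k δ s : ℝ) : ℝ :=
  lam / K * exp (-lam * (k - s)) / (δ + exp (-lam * (k - s)))

theorem hasDerivAt_exp_neg_mul_sub (lam k s : ℝ) :
    HasDerivAt (fun x => exp (-lam * (k - x))) (lam * exp (-lam * (k - s))) s := by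
  simpa [mul_comm] using (((hasDerivAt_id s).const_sub k).const_mul (-lam)).exp

theorem continuous_riccatiBarrier (lam K k : ℝ) {δ : ℝ} (hδ : 0 ≤ δ) :
    Continuous (riccatiBarrier lam K k δ) := by
  unfold riccatiBarrier
  exact Continuous.div (by fun_prop) (by fun_prop) fun s => by positivity

theorem integral_exp_mul_riccatiBarrier_sq (lam K k t : ℝ) {δ : ℝ} (hδ : 0 ≤ δ) :
    ∫ s in t..k, exp (-lam * (s - t)) * riccatiBarrier lam K k δ s ^ 2
      = lam * exp (-lam * (k - t)) / K ^ 2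
          * ((δ + exp (-lam * (k - t)))⁻¹ - (δ + 1)⁻¹) := by
  have hderiv : ∀ s ∈ uIcc t k, HasDerivAt
      (fun x => -(lam * exp (-lam * (k - t)) / K ^ 2) * (δ + exp (-lam * (k - x)))⁻¹)
      (exp (-lam * (s - t)) * riccatiBarrier lam K k δ s ^ 2) s := by
    intro s _
    have hden : δ + exp (-lam * (k - s)) ≠ 0 := by positivity
    refine ((((hasDerivAt_exp_neg_mul_sub lam k s).const_add δ).inv hden).const_mul _
      ).congr_deriv ?_
    have hexp : exp (-lam * (s - t)) * exp (-lam * (k - s)) = exp (-lam * (k - t)) := by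
      rw [← exp_add]; ring_nf
    unfold riccatiBarrier
    rw [← hexp]
    field_simp
  have hint : IntervalIntegrable (fun s => exp (-lam * (s - t)) * riccatiBarrier lam K k δ s ^ 2)
      MeasureTheory.volume t k :=
    ((Continuous.mul (by fun_prop) ((continuous_riccatiBarrier lam K k hδ).pow 2))
      ).intervalIntegrable t k
  rw [intervalIntegral.integral_eq_sub_of_hasDerivAt hderiv hint]
  simp only [sub_self, mul_zero, exp_zero]
  ring

theorem riccatiBarrier_strict_supersolution {lam K : ℝ} (hlam : 0 < lam) (hK : 0 < K)
    (k t : ℝ) {δ : ℝ} (hδ₀ : 0 ≤ δ) (hδ₁ : δ < 1) :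
    lam / (2 * K) * exp (-lam * (k - t))
        + K * ∫ s in t..k, exp (-lam * (s - t)) * riccatiBarrier lam K k δ s ^ 2
      < riccatiBarrier lam K k δ t := by
  rw [integral_exp_mul_riccatiBarrier_sq lam K k t hδ₀]
  have hE : 0 < exp (-lam * (k - t)) := exp_pos _
  have hgap : 0 < lam * exp (-lam * (k - t)) / (2 * K) * ((1 - δ) / (1 + δ)) := by
    have : 0 < 1 - δ := by linarith
    positivity
  have hidentity : lam / (2 * K) * exp (-lam * (k - t))
        + K * (lam * exp (-lam * (k - t)) / K ^ 2
          * ((δ + exp (-lam * (k - t)))⁻¹ - (δ + 1)⁻¹))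
      = riccatiBarrier lam K k δ t
          - lam * exp (-lam * (k - t)) / (2 * K) * ((1 - δ) / (1 + δ)) := by
    unfold riccatiBarrier
    field_simp
    ring
  linarith

theorem lt_riccatiBarrier_of_integral_le {lam K : ℝ} (hlam : 0 < lam) (hK : 0 < K)
    {k : ℝ} {g : ℝ → ℝ} (hcont : ContinuousOn g (Icc 0 k))
    (hnonneg : ∀ t ∈ Icc (0:ℝ) k, 0 ≤ g t)
    (hineq : ∀ t ∈ Icc (0:ℝ) k,
      g t ≤ lam / (2 * K) * exp (-lam * (k - t))
        + K * ∫ s in t..k, exp (-lam * (s - t)) * g s ^ 2)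
    {δ : ℝ} (hδ₀ : 0 ≤ δ) (hδ₁ : δ < 1) :
    ∀ t ∈ Icc (0:ℝ) k, g t < riccatiBarrier lam K k δ t := by
  have hB := continuous_riccatiBarrier lam K k hδ₀
  refine hcont.lt_on_Icc_of_backward_step hB.continuousOn fun t ht hlt => ?_
  have hsub : Icc t k ⊆ Icc 0 k := Icc_subset_Icc_left ht.1
  have hmono : ∫ s in t..k, exp (-lam * (s - t)) * g s ^ 2
      ≤ ∫ s in t..k, exp (-lam * (s - t)) * riccatiBarrier lam K k δ s ^ 2 := by
    refine intervalIntegral.integral_mono_on_of_le_Ioo ht.2 ?_ ?_ fun s hs => ?_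
    · exact ((Continuous.continuousOn (by fun_prop)).mul ((hcont.mono hsub).pow 2)
        ).intervalIntegrable_of_Icc ht.2
    · exact (Continuous.mul (by fun_prop) (hB.pow 2)).intervalIntegrable t k
    · have hg := hnonneg s (hsub (Ioo_subset_Icc_self hs))
      have hsq := pow_le_pow_left₀ hg (hlt s (Ioo_subset_Ioc_self hs)).le 2
      gcongr
  calc g t ≤ lam / (2 * K) * exp (-lam * (k - t))
          + K * ∫ s in t..k, exp (-lam * (s - t)) * g s ^ 2 := hineq t ht
    _ ≤ lam / (2 * K) * exp (-lam * (k - t))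
          + K * ∫ s in t..k, exp (-lam * (s - t)) * riccatiBarrier lam K k δ s ^ 2 := by gcongr
    _ < riccatiBarrier lam K k δ t := riccatiBarrier_strict_supersolution hlam hK k t hδ₀ hδ₁

theorem riccati_decay_estimate_general
    (lam K₁ K₂ : ℝ) (hlam : 0 < lam) (hK₁ : 0 < K₁) (hK₂ : 0 < K₂)
    (k : ℝ) (g : ℝ → ℝ)
    (hcont : ContinuousOn g (Set.Icc 0 k))
    (hnonneg : ∀ t ∈ Set.Icc (0:ℝ) k, 0 ≤ g t)
    (hineq : ∀ t ∈ Set.Icc (0:ℝ) k,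
      g t ≤ (lam / (2 * K₁ * K₂)) * Real.exp (-lam * (k - t))
        + K₁ * K₂ * ∫ s in t..k, Real.exp (-lam * (s - t)) * (g s) ^ 2) :
    ∀ t ∈ Set.Icc (0:ℝ) k, g t ≤ (lam / (K₁ * K₂)) * Real.exp (-lam * (k - t)) := by
  intro t ht
  have hE_pos : 0 < exp (-lam * (k - t)) := exp_pos _
  have hE_le_one : exp (-lam * (k - t)) ≤ 1 :=
    exp_le_one_iff.2 (mul_nonpos_of_nonpos_of_nonneg (neg_nonpos.2 hlam.le) (sub_nonneg.2 ht.2))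
  have hineq_K : ∀ t ∈ Icc (0:ℝ) k, g t ≤ lam / (2 * (K₁ * K₂)) * exp (-lam * (k - t))
      + K₁ * K₂ * ∫ s in t..k, exp (-lam * (s - t)) * g s ^ 2 := by
    simpa only [mul_assoc] using hineq
  have hbarrier := lt_riccatiBarrier_of_integral_le hlam (mul_pos hK₁ hK₂) hcont hnonneg hineq_K
    (δ := 1 - exp (-lam * (k - t))) (by linarith) (by linarith) t ht
  simpa [riccatiBarrier] using hbarrier.le

/-- Key a priori integral estimate from the proof of Theorem 4.6:
if `g ≥ 0` is continuous on `[0,k]` and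
`g t ≤ ρ e^{-λ(k-t)} + K₁K₂ ∫ₜᵏ e^{-λ(s-t)} g(s)² ds` with `ρ = λ/(2K₁K₂)`,
then `g t ≤ (λ/(K₁K₂)) e^{-λ(k-t)}`. -/
theorem riccati_decay_estimate
    (lam K₁ K₂ : ℝ) (hlam : 0 < lam) (hK₁ : 0 < K₁) (hK₂ : 0 < K₂)
    (k : ℝ) (hk : 0 ≤ k) (g : ℝ → ℝ)
    (hcont : ContinuousOn g (Set.Icc 0 k))
    (hnonneg : ∀ t ∈ Set.Icc (0:ℝ) k, 0 ≤ g t)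
    (hineq : ∀ t ∈ Set.Icc (0:ℝ) k,
      g t ≤ (lam / (2 * K₁ * K₂)) * Real.exp (-lam * (k - t))
        + K₁ * K₂ * ∫ s in t..k, Real.exp (-lam * (s - t)) * (g s) ^ 2) :
    ∀ t ∈ Set.Icc (0:ℝ) k, g t ≤ (lam / (K₁ * K₂)) * Real.exp (-lam * (k - t)) :=
  riccati_decay_estimate_general lam K₁ K₂ hlam hK₁ hK₂ k g hcont hnonneg hineq
end

section
/- For all positive integers p, q and all δ, ρ > 0 there exists K > 0 with the following property: for every symmetric M₁₁ ∈ ℝ^{p×p} with M₁₁ ⪰ δI, every symmetric M₂₂ ∈ ℝ^{q×q} with M₂₂ ⪯ −δI, and every M₁₂ ∈ ℝ^{p×q} with ‖M₁₂‖_F ≤ ρ, the block matrix M = [[M₁₁, M₁₂],[M₁₂ᵀ, M₂₂]] is invertible and ‖M⁻¹‖_F ≤ K. -/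
open Matrix

/-- The Frobenius norm of a real matrix. -/
noncomputable def frobeniusNorm {α β : Type*} [Fintype α] [Fintype β]
    (M : Matrix α β ℝ) : ℝ :=
  Real.sqrt (∑ i, ∑ j, (M i j) ^ 2)

/-!
With `J = diag(I, -I)`, the form `x ↦ (J x) ⬝ (M x)` of the block matrix `M` is
`u ⬝ M₁₁ u - v ⬝ M₂₂ v ≥ δ |x|²`: the off-diagonal blocks cancel because they are transposes
of each other. Since `J` is an isometry, Cauchy–Schwarz gives `|M x| ≥ δ |x|`, so `M` is
invertible and every column of `M⁻¹` has length at most `1 / δ`; summing over the `p + q`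
columns bounds `‖M⁻¹‖_F` by `√(p + q) / δ`.
-/

section BoundedBelow

variable {n : Type*} [Fintype n]

theorem dotProduct_self_nonneg (x : n → ℝ) : 0 ≤ x ⬝ᵥ x := by
  simpa using dotProduct_self_star_nonneg x

theorem dotProduct_sq_le_dotProduct_self_mul_dotProduct_self (x y : n → ℝ) :
    (x ⬝ᵥ y) ^ 2 ≤ (x ⬝ᵥ x) * (y ⬝ᵥ y) := by
  simpa only [dotProduct, sq] using Finset.sum_mul_sq_le_sq_mul_sq Finset.univ x y

theorem sq_mul_dotProduct_self_le_of_coercive {A J : Matrix n n ℝ} {δ : ℝ} (hδ : 0 ≤ δ)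
    (hJ : ∀ x, (J *ᵥ x) ⬝ᵥ (J *ᵥ x) ≤ x ⬝ᵥ x)
    (hA : ∀ x, δ * (x ⬝ᵥ x) ≤ (J *ᵥ x) ⬝ᵥ (A *ᵥ x)) (x : n → ℝ) :
    δ ^ 2 * (x ⬝ᵥ x) ≤ (A *ᵥ x) ⬝ᵥ (A *ᵥ x) := by
  have hx := dotProduct_self_nonneg x
  have hAx := dotProduct_self_nonneg (A *ᵥ x)
  have hcs : (δ * (x ⬝ᵥ x)) ^ 2 ≤ (x ⬝ᵥ x) * ((A *ᵥ x) ⬝ᵥ (A *ᵥ x)) :=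
    calc (δ * (x ⬝ᵥ x)) ^ 2 ≤ ((J *ᵥ x) ⬝ᵥ (A *ᵥ x)) ^ 2 :=
          pow_le_pow_left₀ (by positivity) (hA x) 2
      _ ≤ ((J *ᵥ x) ⬝ᵥ (J *ᵥ x)) * ((A *ᵥ x) ⬝ᵥ (A *ᵥ x)) :=
          dotProduct_sq_le_dotProduct_self_mul_dotProduct_self _ _
      _ ≤ (x ⬝ᵥ x) * ((A *ᵥ x) ⬝ᵥ (A *ᵥ x)) := by gcongr; exact hJ x
  rcases hx.eq_or_lt with h0 | hpos
  · rw [← h0, mul_zero]; exact hAx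
  · nlinarith

variable [DecidableEq n] {A : Matrix n n ℝ} {δ : ℝ}

theorem isUnit_of_sq_mul_dotProduct_self_le (hδ : 0 < δ)
    (hA : ∀ x, δ ^ 2 * (x ⬝ᵥ x) ≤ (A *ᵥ x) ⬝ᵥ (A *ᵥ x)) : IsUnit A := by
  rw [← mulVec_injective_iff_isUnit]
  intro x y hxy
  have h := hA (x - y)
  rw [mulVec_sub, hxy, sub_self, dotProduct_zero] at h
  have : (x - y) ⬝ᵥ (x - y) = 0 :=
    le_antisymm (nonpos_of_mul_nonpos_right h (by positivity)) (dotProduct_self_nonneg _)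
  exact sub_eq_zero.mp (dotProduct_self_eq_zero.mp this)

theorem col_inv_dotProduct_self_le (hδ : 0 < δ)
    (hA : ∀ x, δ ^ 2 * (x ⬝ᵥ x) ≤ (A *ᵥ x) ⬝ᵥ (A *ᵥ x)) (j : n) :
    A⁻¹.col j ⬝ᵥ A⁻¹.col j ≤ 1 / δ ^ 2 := by
  have hdet := (isUnit_iff_isUnit_det A).mp (isUnit_of_sq_mul_dotProduct_self_le hδ hA)
  have hcol : A *ᵥ A⁻¹.col j = Pi.single j 1 := by
    rw [← mulVec_single_one, mulVec_mulVec, mul_nonsing_inv A hdet, one_mulVec]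
  have h := hA (A⁻¹.col j)
  rw [hcol, dotProduct_single_one, Pi.single_eq_same] at h
  rw [le_div_iff₀ (by positivity)]
  linarith

end BoundedBelow

theorem frobeniusNorm_eq_sqrt_sum_col {m n : Type*} [Fintype m] [Fintype n]
    (M : Matrix m n ℝ) : frobeniusNorm M = Real.sqrt (∑ j, M.col j ⬝ᵥ M.col j) := by
  rw [frobeniusNorm, Finset.sum_comm]
  simp only [dotProduct, col_apply, sq]

theorem frobeniusNorm_inv_le_of_sq_mul_dotProduct_self_le {n : Type*} [Fintype n] [DecidableEq n]
    {A : Matrix n n ℝ} {δ : ℝ} (hδ : 0 < δ)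
    (hA : ∀ x, δ ^ 2 * (x ⬝ᵥ x) ≤ (A *ᵥ x) ⬝ᵥ (A *ᵥ x)) :
    frobeniusNorm A⁻¹ ≤ Real.sqrt (Fintype.card n) / δ := by
  have hsum : ∑ j, A⁻¹.col j ⬝ᵥ A⁻¹.col j ≤ Fintype.card n / δ ^ 2 :=
    calc ∑ j, A⁻¹.col j ⬝ᵥ A⁻¹.col j ≤ ∑ _j : n, 1 / δ ^ 2 :=
          Finset.sum_le_sum fun j _ => col_inv_dotProduct_self_le hδ hA j
      _ = Fintype.card n / δ ^ 2 := by simp [div_eq_mul_inv]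
  calc frobeniusNorm A⁻¹ ≤ Real.sqrt (Fintype.card n / δ ^ 2) := by
        rw [frobeniusNorm_eq_sqrt_sum_col]; exact Real.sqrt_le_sqrt hsum
    _ = Real.sqrt (Fintype.card n) / δ := by
        rw [Real.sqrt_div' _ (by positivity), Real.sqrt_sq hδ.le]

theorem le_dotProduct_mulVec_of_posSemidef_sub_smul_one {n : Type*} [Fintype n] [DecidableEq n]
    {M : Matrix n n ℝ} {δ : ℝ} (hM : (M - δ • (1 : Matrix n n ℝ)).PosSemidef) (u : n → ℝ) :
    δ * (u ⬝ᵥ u) ≤ u ⬝ᵥ (M *ᵥ u) := by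
  have h := hM.dotProduct_mulVec_nonneg u
  simp only [star_trivial, sub_mulVec, dotProduct_sub, smul_mulVec, one_mulVec, dotProduct_smul,
    smul_eq_mul] at h
  linarith

def signatureMatrix (p q : Type*) [DecidableEq p] [DecidableEq q] :
    Matrix (p ⊕ q) (p ⊕ q) ℝ :=
  fromBlocks 1 0 0 (-1)

section Signature

variable {p q : Type*} [Fintype p] [Fintype q] [DecidableEq p] [DecidableEq q]

theorem signatureMatrix_mulVec_sumElim (u : p → ℝ) (v : q → ℝ) :
    signatureMatrix p q *ᵥ Sum.elim u v = Sum.elim u (-v) := by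
  simp [signatureMatrix, fromBlocks_mulVec, neg_mulVec]

theorem signatureMatrix_mulVec_dotProduct_self (x : p ⊕ q → ℝ) :
    (signatureMatrix p q *ᵥ x) ⬝ᵥ (signatureMatrix p q *ᵥ x) = x ⬝ᵥ x := by
  obtain ⟨u, v, rfl⟩ : ∃ u v, x = Sum.elim u v := ⟨_, _, (Sum.elim_comp_inl_inr x).symm⟩
  simp [signatureMatrix_mulVec_sumElim, sumElim_dotProduct_sumElim]

theorem le_signatureMatrix_mulVec_dotProduct_fromBlocks_mulVec {M₁₁ : Matrix p p ℝ}
    {M₂₂ : Matrix q q ℝ} {δ : ℝ} (hM₁₁ : ∀ u, δ * (u ⬝ᵥ u) ≤ u ⬝ᵥ (M₁₁ *ᵥ u))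
    (hM₂₂ : ∀ v, δ * (v ⬝ᵥ v) ≤ -(v ⬝ᵥ (M₂₂ *ᵥ v))) (M₁₂ : Matrix p q ℝ) (x : p ⊕ q → ℝ) :
    δ * (x ⬝ᵥ x) ≤
      (signatureMatrix p q *ᵥ x) ⬝ᵥ (fromBlocks M₁₁ M₁₂ M₁₂ᵀ M₂₂ *ᵥ x) := by
  obtain ⟨u, v, rfl⟩ : ∃ u v, x = Sum.elim u v := ⟨_, _, (Sum.elim_comp_inl_inr x).symm⟩
  have hcross : v ⬝ᵥ (M₁₂ᵀ *ᵥ u) = u ⬝ᵥ (M₁₂ *ᵥ v) := by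
    rw [dotProduct_mulVec, vecMul_transpose, dotProduct_comm]
  simp only [signatureMatrix_mulVec_sumElim, fromBlocks_mulVec, Sum.elim_comp_inl,
    Sum.elim_comp_inr, sumElim_dotProduct_sumElim, dotProduct_add, neg_dotProduct, hcross]
  linarith [hM₁₁ u, hM₂₂ v]

end Signature

theorem uniform_block_inverse_bound_general
    (p q : ℕ) (δ ρ : ℝ) (hδ : 0 < δ) :
    ∃ K : ℝ, 0 < K ∧
      ∀ (M₁₁ : Matrix (Fin p) (Fin p) ℝ) (M₂₂ : Matrix (Fin q) (Fin q) ℝ)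
        (M₁₂ : Matrix (Fin p) (Fin q) ℝ),
        M₁₁.IsSymm → M₂₂.IsSymm →
        (M₁₁ - δ • (1 : Matrix (Fin p) (Fin p) ℝ)).PosSemidef →
        (-(δ • (1 : Matrix (Fin q) (Fin q) ℝ)) - M₂₂).PosSemidef →
        frobeniusNorm M₁₂ ≤ ρ →
        IsUnit (Matrix.fromBlocks M₁₁ M₁₂ M₁₂ᵀ M₂₂) ∧
          frobeniusNorm (Matrix.fromBlocks M₁₁ M₁₂ M₁₂ᵀ M₂₂)⁻¹ ≤ K := by
  refine ⟨Real.sqrt (p + q) / δ + 1, by positivity, ?_⟩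
  intro M₁₁ M₂₂ M₁₂ _ _ hM₁₁ hM₂₂ _
  have hneg : ∀ v, δ * (v ⬝ᵥ v) ≤ -(v ⬝ᵥ (M₂₂ *ᵥ v)) := fun v => by
    rw [neg_sub_comm] at hM₂₂
    simpa only [neg_mulVec, dotProduct_neg] using
      le_dotProduct_mulVec_of_posSemidef_sub_smul_one hM₂₂ v
  have hbelow := sq_mul_dotProduct_self_le_of_coercive hδ.le
    (fun x => (signatureMatrix_mulVec_dotProduct_self x).le)
    (le_signatureMatrix_mulVec_dotProduct_fromBlocks_mulVec
      (le_dotProduct_mulVec_of_posSemidef_sub_smul_one hM₁₁) hneg M₁₂)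
  refine ⟨isUnit_of_sq_mul_dotProduct_self_le hδ hbelow, ?_⟩
  calc frobeniusNorm (fromBlocks M₁₁ M₁₂ M₁₂ᵀ M₂₂)⁻¹
      ≤ Real.sqrt (Fintype.card (Fin p ⊕ Fin q)) / δ :=
        frobeniusNorm_inv_le_of_sq_mul_dotProduct_self_le hδ hbelow
    _ ≤ Real.sqrt (p + q) / δ + 1 := by simp

/-- Corollary 4.4 (matrix content): a uniform bound on the inverse of the block
matrix `[[M₁₁, M₁₂],[M₁₂ᵀ, M₂₂]]`, depending only on `p, q, δ, ρ`, valid whenever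
`M₁₁ ⪰ δ I`, `M₂₂ ⪯ -δ I` are symmetric and `‖M₁₂‖_F ≤ ρ`. -/
theorem uniform_block_inverse_bound
    (p q : ℕ) (hp : 0 < p) (hq : 0 < q) (δ ρ : ℝ) (hδ : 0 < δ) (hρ : 0 < ρ) :
    ∃ K : ℝ, 0 < K ∧
      ∀ (M₁₁ : Matrix (Fin p) (Fin p) ℝ) (M₂₂ : Matrix (Fin q) (Fin q) ℝ)
        (M₁₂ : Matrix (Fin p) (Fin q) ℝ),
        M₁₁.IsSymm → M₂₂.IsSymm →
        (M₁₁ - δ • (1 : Matrix (Fin p) (Fin p) ℝ)).PosSemidef →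
        (-(δ • (1 : Matrix (Fin q) (Fin q) ℝ)) - M₂₂).PosSemidef →
        frobeniusNorm M₁₂ ≤ ρ →
        IsUnit (Matrix.fromBlocks M₁₁ M₁₂ M₁₂ᵀ M₂₂) ∧
          frobeniusNorm (Matrix.fromBlocks M₁₁ M₁₂ M₁₂ᵀ M₂₂)⁻¹ ≤ K :=
  uniform_block_inverse_bound_general p q δ ρ hδ
end

section
/- Let H₁ and H₂ be real Hilbert spaces and δ > 0. Let M₁₁ : H₁ → H₁ and M₂₂ : H₂ → H₂ be bounded self-adjoint linear operators with ⟨M₁₁u, u⟩ ≥ δ‖u‖² for all u ∈ H₁ and ⟨M₂₂v, v⟩ ≤ −δ‖v‖² for all v ∈ H₂, and let M₁₂ : H₂ → H₁ be a bounded linear operator with adjoint M₁₂* : H₁ → H₂. Define the bounded self-adjoint operator M on H := H₁ × H₂ by M(u, v) := (M₁₁u + M₁₂v, M₁₂*u + M₂₂v), and set Φ := M₂₂ − M₁₂* M₁₁⁻¹ M₁₂. Then M is bijective with bounded inverse given by M⁻¹(x, y) = ( (M₁₁⁻¹ + (M₁₁⁻¹M₁₂) Φ⁻¹ (M₁₁⁻¹M₁₂)*)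 x − (M₁₁⁻¹M₁₂) Φ⁻¹ y , −Φ⁻¹ (M₁₁⁻¹M₁₂)* x + Φ⁻¹ y ), and moreover ‖M⁻¹‖ ≤ 2/δ + 2‖M‖/δ² + ‖M‖²/δ³. -/
/-!
Coercivity makes `M₁₁` invertible (Lax–Milgram) with `‖M₁₁⁻¹‖ ≤ 1/δ`, and `M₁₁⁻¹` is positive
because `⟪M₁₁⁻¹ w, w⟫ = ⟪M₁₁ u, u⟫` for `u = M₁₁⁻¹ w`. Hence the Schur complement
`Φ = M₂₂ - M₁₂* M₁₁⁻¹ M₁₂` satisfies `⟪Φ v, v⟫ ≤ ⟪M₂₂ v, v⟫ ≤ -δ‖v‖²`, so `Φ` is invertible with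
`‖Φ⁻¹‖ ≤ 1/δ`. Solving `M (u, v) = (x, y)` by elimination gives `v = Φ⁻¹ (y - M₁₂* M₁₁⁻¹ x)` and
`u = M₁₁⁻¹ (x - M₁₂ v)`, which is the block formula; since `M₁₁` is self-adjoint,
`M₁₂* M₁₁⁻¹ = (M₁₁⁻¹ M₁₂)*`. Every block of the inverse is a product of `M₁₁⁻¹`, `Φ⁻¹` and
`M₁₂`, `M₁₂*`, whose norms are at most `‖M‖`, and summing the four block norms gives the bound.
-/

open scoped RealInnerProductSpace
open ContinuousLinearMap

variable {H₁ H₂ : Type*}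
  [NormedAddCommGroup H₁] [InnerProductSpace ℝ H₁] [CompleteSpace H₁]
  [NormedAddCommGroup H₂] [InnerProductSpace ℝ H₂] [CompleteSpace H₂]

/-- The element `(u, v)` of the Hilbert space `H₁ × H₂` (with the `L²` product structure). -/
noncomputable def pairL2 (u : H₁) (v : H₂) : WithLp 2 (H₁ × H₂) :=
  (WithLp.equiv 2 (H₁ × H₂)).symm (u, v)

/-- The block operator `M(u, v) = (M₁₁ u + M₁₂ v, M₁₂* u + M₂₂ v)` on the Hilbert space
`H₁ × H₂` (with the `L²` product structure). -/
noncomputable def blockOp (M₁₁ : H₁ →L[ℝ] H₁) (M₂₂ : H₂ →L[ℝ] H₂) (M₁₂ : H₂ →L[ℝ] H₁) :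
    WithLp 2 (H₁ × H₂) →L[ℝ] WithLp 2 (H₁ × H₂) :=
  ((WithLp.prodContinuousLinearEquiv 2 ℝ H₁ H₂).symm.toContinuousLinearMap).comp
    ((((M₁₁.comp (ContinuousLinearMap.fst ℝ H₁ H₂)
          + M₁₂.comp (ContinuousLinearMap.snd ℝ H₁ H₂)).prod
        ((ContinuousLinearMap.adjoint M₁₂).comp (ContinuousLinearMap.fst ℝ H₁ H₂)
          + M₂₂.comp (ContinuousLinearMap.snd ℝ H₁ H₂)))).comp
      (WithLp.prodContinuousLinearEquiv 2 ℝ H₁ H₂).toContinuousLinearMap)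

section Block

variable {𝕜 E F : Type*} [NontriviallyNormedField 𝕜]
  [NormedAddCommGroup E] [NormedSpace 𝕜 E] [NormedAddCommGroup F] [NormedSpace 𝕜 F]

/-- `blockOp M₁₁ M₂₂ M₁₂` is definitionally `blockMap M₁₁ M₁₂ (adjoint M₁₂) M₂₂`. -/
noncomputable def blockMap (A : E →L[𝕜] E) (B : F →L[𝕜] E) (C : E →L[𝕜] F) (D : F →L[𝕜] F) :
    WithLp 2 (E × F) →L[𝕜] WithLp 2 (E × F) :=
  ((WithLp.prodContinuousLinearEquiv 2 𝕜 E F).symm.toContinuousLinearMap).comp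
    ((((A.comp (ContinuousLinearMap.fst 𝕜 E F)
          + B.comp (ContinuousLinearMap.snd 𝕜 E F)).prod
        (C.comp (ContinuousLinearMap.fst 𝕜 E F)
          + D.comp (ContinuousLinearMap.snd 𝕜 E F)))).comp
      (WithLp.prodContinuousLinearEquiv 2 𝕜 E F).toContinuousLinearMap)

@[simp]
theorem blockMap_apply (A : E →L[𝕜] E) (B : F →L[𝕜] E) (C : E →L[𝕜] F) (D : F →L[𝕜] F)
    (x : E) (y : F) :
    blockMap A B C D (WithLp.toLp 2 (x, y)) = WithLp.toLp 2 (A x + B y, C x + D y) :=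
  rfl

theorem norm_toLp_le_add (x : E) (y : F) : ‖WithLp.toLp 2 (x, y)‖ ≤ ‖x‖ + ‖y‖ := by
  calc ‖WithLp.toLp 2 (x, y)‖ = ‖WithLp.toLp 2 (x, (0 : F)) + WithLp.toLp 2 ((0 : E), y)‖ := by
        rw [← WithLp.toLp_add, Prod.mk_add_mk, add_zero, zero_add]
    _ ≤ ‖x‖ + ‖y‖ := by
        grw [norm_add_le, WithLp.norm_toLp_fst, WithLp.norm_toLp_snd]

theorem norm_blockMap_le (A : E →L[𝕜] E) (B : F →L[𝕜] E) (C : E →L[𝕜] F) (D : F →L[𝕜] F) :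
    ‖blockMap A B C D‖ ≤ ‖A‖ + ‖B‖ + ‖C‖ + ‖D‖ := by
  refine opNorm_le_bound _ (by positivity) fun z => ?_
  obtain ⟨x, y⟩ := z
  have hx : ‖x‖ ≤ ‖WithLp.toLp 2 (x, y)‖ := WithLp.norm_fst_le _ (WithLp.toLp 2 (x, y))
  have hy : ‖y‖ ≤ ‖WithLp.toLp 2 (x, y)‖ := WithLp.norm_snd_le _ (WithLp.toLp 2 (x, y))
  calc ‖blockMap A B C D (WithLp.toLp 2 (x, y))‖ ≤ ‖A x + B y‖ + ‖C x + D y‖ :=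
        norm_toLp_le_add _ _
    _ ≤ (‖A‖ * ‖x‖ + ‖B‖ * ‖y‖) + (‖C‖ * ‖x‖ + ‖D‖ * ‖y‖) := by
        grw [norm_add_le, norm_add_le, le_opNorm A, le_opNorm B, le_opNorm C, le_opNorm D]
    _ ≤ (‖A‖ + ‖B‖ + ‖C‖ + ‖D‖) * ‖WithLp.toLp 2 (x, y)‖ := by
        grw [hx, hy]; linarith

theorem norm_le_norm_blockMap (A : E →L[𝕜] E) (B : F →L[𝕜] E) (C : E →L[𝕜] F)
    (D : F →L[𝕜] F) : ‖B‖ ≤ ‖blockMap A B C D‖ := by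
  refine opNorm_le_bound _ (norm_nonneg _) fun y => ?_
  calc ‖B y‖ = ‖(blockMap A B C D (WithLp.toLp 2 (0, y))).fst‖ := by simp
    _ ≤ ‖blockMap A B C D (WithLp.toLp 2 (0, y))‖ := WithLp.norm_fst_le _ _
    _ ≤ ‖blockMap A B C D‖ * ‖y‖ := by
        grw [le_opNorm (blockMap A B C D), WithLp.norm_toLp_snd]

theorem norm_le_inv_of_mul_norm_le {δ : ℝ} (hδ : 0 < δ) {A Ainv : E →L[𝕜] E}
    (hA : A.comp Ainv = .id 𝕜 E) (hbelow : ∀ u, δ * ‖u‖ ≤ ‖A u‖) : ‖Ainv‖ ≤ δ⁻¹ := by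
  refine opNorm_le_bound _ (by positivity) fun x => ?_
  rw [inv_mul_eq_div, le_div_iff₀' hδ]
  simpa [show A (Ainv x) = x from congr($hA x)] using hbelow (Ainv x)

section SchurComplement

variable (Ainv : E →L[𝕜] E) (B : F →L[𝕜] E) (C : E →L[𝕜] F) (Sinv : F →L[𝕜] F)

noncomputable def schurBlockInverse : WithLp 2 (E × F) →L[𝕜] WithLp 2 (E × F) :=
  blockMap (Ainv + (Ainv.comp B).comp (Sinv.comp (C.comp Ainv))) (-((Ainv.comp B).comp Sinv))
    (-(Sinv.comp (C.comp Ainv))) Sinv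

theorem schurBlockInverse_apply (x : E) (y : F) :
    schurBlockInverse Ainv B C Sinv (WithLp.toLp 2 (x, y)) =
      WithLp.toLp 2 (Ainv (x - B (Sinv (y - C (Ainv x)))), Sinv (y - C (Ainv x))) := by
  simp only [schurBlockInverse, blockMap_apply, add_apply, neg_apply, comp_apply, map_sub]
  congr 2 <;> abel

variable {Ainv B C Sinv} {A : E →L[𝕜] E} {D : F →L[𝕜] F}

theorem blockMap_comp_schurBlockInverse (hA : A.comp Ainv = .id 𝕜 E)
    (hS : (D - C.comp (Ainv.comp B)).comp Sinv = .id 𝕜 F) :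
    (blockMap A B C D).comp (schurBlockInverse Ainv B C Sinv) = .id 𝕜 (WithLp 2 (E × F)) := by
  ext1 z
  obtain ⟨x, y⟩ := z
  have hA' (u : E) : A (Ainv u) = u := congr($hA u)
  rw [comp_apply, schurBlockInverse_apply]
  set z := Sinv (y - C (Ainv x))
  have hz : D z - C (Ainv (B z)) = y - C (Ainv x) := congr($hS (y - C (Ainv x)))
  simp only [blockMap_apply, hA', map_sub, id_apply]
  congr 2
  · abel
  · linear_combination (norm := abel) hz

theorem schurBlockInverse_comp_blockMap (hA : Ainv.comp A = .id 𝕜 E)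
    (hS : Sinv.comp (D - C.comp (Ainv.comp B)) = .id 𝕜 F) :
    (schurBlockInverse Ainv B C Sinv).comp (blockMap A B C D) = .id 𝕜 (WithLp 2 (E × F)) := by
  ext1 z
  obtain ⟨u, v⟩ := z
  have hA' (w : E) : Ainv (A w) = w := congr($hA w)
  have hS' (w : F) : Sinv (D w - C (Ainv (B w))) = w := congr($hS w)
  have hz : Sinv (C u + D v - C (Ainv (A u + B v))) = v := by
    rw [map_add, hA', map_add]
    conv_rhs => rw [← hS' v]
    congr 1
    abel
  simp only [comp_apply, blockMap_apply, schurBlockInverse_apply, hz, add_sub_cancel_right, hA',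
    id_apply]

variable (Ainv B C Sinv)

theorem norm_schurBlockInverse_le :
    ‖schurBlockInverse Ainv B C Sinv‖ ≤
      ‖Ainv‖ + ‖Ainv.comp B‖ * (‖Sinv‖ * ‖C.comp Ainv‖) + ‖Ainv.comp B‖ * ‖Sinv‖
        + ‖Sinv‖ * ‖C.comp Ainv‖ + ‖Sinv‖ := by
  set X := Ainv.comp B
  set Y := C.comp Ainv
  have hP : ‖Ainv + X.comp (Sinv.comp Y)‖ ≤ ‖Ainv‖ + ‖X‖ * (‖Sinv‖ * ‖Y‖) :=
    (norm_add_le _ _).trans <| add_le_add le_rfl <| (opNorm_comp_le _ _).trans <|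
      mul_le_mul_of_nonneg_left (opNorm_comp_le _ _) (norm_nonneg _)
  calc ‖schurBlockInverse Ainv B C Sinv‖
      ≤ ‖Ainv + X.comp (Sinv.comp Y)‖ + ‖-X.comp Sinv‖ + ‖-Sinv.comp Y‖ + ‖Sinv‖ :=
        norm_blockMap_le _ _ _ _
    _ ≤ _ := by
        rw [norm_neg, norm_neg]
        linarith [opNorm_comp_le X Sinv, opNorm_comp_le Sinv Y]

end SchurComplement

end Block

theorem IsSelfAdjoint.of_mul_eq_one {R : Type*} [Monoid R] [StarMul R] {a b : R}
    (ha : IsSelfAdjoint a) (hab : a * b = 1) : IsSelfAdjoint b :=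
  left_inv_eq_right_inv (by rw [← ha.star_eq, ← star_mul, hab, star_one]) hab

section Coercive

variable {E F : Type*} [NormedAddCommGroup E] [InnerProductSpace ℝ E]
  [NormedAddCommGroup F] [InnerProductSpace ℝ F]

theorem mul_norm_le_norm_apply_of_coercive {δ : ℝ} {A : E →L[ℝ] E}
    (hA : ∀ u, δ * ‖u‖ ^ 2 ≤ ⟪A u, u⟫) (u : E) : δ * ‖u‖ ≤ ‖A u‖ := by
  rcases eq_or_ne u 0 with rfl | hu
  · simp
  refine le_of_mul_le_mul_right ?_ (norm_pos_iff.mpr hu)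
  calc δ * ‖u‖ * ‖u‖ = δ * ‖u‖ ^ 2 := by ring
    _ ≤ ⟪A u, u⟫ := hA u
    _ ≤ ‖A u‖ * ‖u‖ := real_inner_le_norm _ _

theorem exists_inverse_of_coercive [CompleteSpace E] {δ : ℝ} (hδ : 0 < δ) (A : E →L[ℝ] E)
    (hA : ∀ u, δ * ‖u‖ ^ 2 ≤ ⟪A u, u⟫) :
    ∃ Ainv : E →L[ℝ] E, A.comp Ainv = .id ℝ E ∧ Ainv.comp A = .id ℝ E ∧ ‖Ainv‖ ≤ δ⁻¹ := by
  have hcoercive : IsCoercive ((innerSL ℝ).comp A) :=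
    ⟨δ, hδ, fun u => by simpa [mul_assoc, ← sq] using hA u⟩
  set e := hcoercive.continuousLinearEquivOfBilin
  have he : (e : E →L[ℝ] E) = A := by
    ext1 v
    exact ext_inner_right ℝ fun w => hcoercive.continuousLinearEquivOfBilin_apply v w
  have hright : A.comp (e.symm : E →L[ℝ] E) = .id ℝ E := by rw [← he, e.coe_comp_coe_symm]
  refine ⟨e.symm, hright, by rw [← he, e.coe_symm_comp_coe], ?_⟩
  exact norm_le_inv_of_mul_norm_le hδ hright (mul_norm_le_norm_apply_of_coercive hA)

theorem exists_inverse_of_inner_le_neg [CompleteSpace E] {δ : ℝ} (hδ : 0 < δ) (A : E →L[ℝ] E)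
    (hA : ∀ u, ⟪A u, u⟫ ≤ -δ * ‖u‖ ^ 2) :
    ∃ Ainv : E →L[ℝ] E, A.comp Ainv = .id ℝ E ∧ Ainv.comp A = .id ℝ E ∧ ‖Ainv‖ ≤ δ⁻¹ := by
  obtain ⟨N, hN, hN', hNnorm⟩ :=
    exists_inverse_of_coercive hδ (-A) fun u => by simpa [neg_mul, le_neg] using hA u
  refine ⟨-N, ?_, ?_, by rwa [norm_neg]⟩
  · rwa [comp_neg, ← neg_comp]
  · rwa [neg_comp, ← comp_neg]

theorem inner_apply_self_nonneg_of_comp_eq_id {A Ainv : E →L[ℝ] E}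
    (hA : ∀ u, 0 ≤ ⟪A u, u⟫) (hAinv : A.comp Ainv = .id ℝ E) (w : E) : 0 ≤ ⟪Ainv w, w⟫ := by
  have hw : A (Ainv w) = w := congr($hAinv w)
  simpa [hw, real_inner_comm] using hA (Ainv w)

theorem inner_schurComplement_apply_self_le [CompleteSpace E] [CompleteSpace F]
    {Ainv : E →L[ℝ] E} (hAinv : ∀ w, 0 ≤ ⟪Ainv w, w⟫) (B : F →L[ℝ] E) (D : F →L[ℝ] F) (v : F) :
    ⟪(D - (adjoint B).comp (Ainv.comp B)) v, v⟫ ≤ ⟪D v, v⟫ := by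
  rw [sub_apply, inner_sub_left, comp_apply, comp_apply, adjoint_inner_left]
  linarith [hAinv (B v)]

end Coercive

theorem hilbert_block_inverse_general
    (δ : ℝ) (hδ : 0 < δ)
    (M₁₁ : H₁ →L[ℝ] H₁) (M₂₂ : H₂ →L[ℝ] H₂) (M₁₂ : H₂ →L[ℝ] H₁)
    (h₁₁sa : IsSelfAdjoint M₁₁)
    (h₁₁ : ∀ u : H₁, δ * ‖u‖ ^ 2 ≤ ⟪M₁₁ u, u⟫)
    (h₂₂ : ∀ v : H₂, ⟪M₂₂ v, v⟫ ≤ -δ * ‖v‖ ^ 2) :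
    ∃ (M₁₁inv : H₁ →L[ℝ] H₁) (Φinv : H₂ →L[ℝ] H₂)
      (Minv : WithLp 2 (H₁ × H₂) →L[ℝ] WithLp 2 (H₁ × H₂)),
      M₁₁.comp M₁₁inv = ContinuousLinearMap.id ℝ H₁ ∧
      M₁₁inv.comp M₁₁ = ContinuousLinearMap.id ℝ H₁ ∧
      (M₂₂ - (ContinuousLinearMap.adjoint M₁₂).comp (M₁₁inv.comp M₁₂)).comp Φinv
        = ContinuousLinearMap.id ℝ H₂ ∧
      Φinv.comp (M₂₂ - (ContinuousLinearMap.adjoint M₁₂).comp (M₁₁inv.comp M₁₂))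
        = ContinuousLinearMap.id ℝ H₂ ∧
      (blockOp M₁₁ M₂₂ M₁₂).comp Minv = ContinuousLinearMap.id ℝ (WithLp 2 (H₁ × H₂)) ∧
      Minv.comp (blockOp M₁₁ M₂₂ M₁₂) = ContinuousLinearMap.id ℝ (WithLp 2 (H₁ × H₂)) ∧
      (∀ (x : H₁) (y : H₂),
        Minv (pairL2 x y) =
          pairL2
            ((M₁₁inv
                + (M₁₁inv.comp M₁₂).comp
                    (Φinv.comp (ContinuousLinearMap.adjoint (M₁₁inv.comp M₁₂)))) x
              - ((M₁₁inv.comp M₁₂).comp Φinv) y)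
            (-(Φinv ((ContinuousLinearMap.adjoint (M₁₁inv.comp M₁₂)) x)) + Φinv y)) ∧
      ‖Minv‖ ≤ 2 / δ + 2 * ‖blockOp M₁₁ M₂₂ M₁₂‖ / δ ^ 2
        + ‖blockOp M₁₁ M₂₂ M₁₂‖ ^ 2 / δ ^ 3 := by
  obtain ⟨Ainv, hA, hA', hAnorm⟩ := exists_inverse_of_coercive hδ M₁₁ h₁₁
  have hAinv_sa : IsSelfAdjoint Ainv := h₁₁sa.of_mul_eq_one hA
  have hAinv_nonneg : ∀ w, 0 ≤ ⟪Ainv w, w⟫ :=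
    inner_apply_self_nonneg_of_comp_eq_id (fun u => le_trans (by positivity) (h₁₁ u)) hA
  obtain ⟨Φinv, hΦ, hΦ', hΦnorm⟩ := exists_inverse_of_inner_le_neg hδ _
    fun v => (inner_schurComplement_apply_self_le hAinv_nonneg M₁₂ M₂₂ v).trans (h₂₂ v)
  have hadj : adjoint (Ainv.comp M₁₂) = (adjoint M₁₂).comp Ainv := by
    rw [adjoint_comp, hAinv_sa.adjoint_eq]
  set m := ‖blockOp M₁₁ M₂₂ M₁₂‖
  have hX : ‖Ainv.comp M₁₂‖ ≤ δ⁻¹ * m := (opNorm_comp_le _ _).trans <|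
    mul_le_mul hAnorm (norm_le_norm_blockMap _ _ _ _) (norm_nonneg _) (by positivity)
  refine ⟨Ainv, Φinv, schurBlockInverse Ainv M₁₂ (adjoint M₁₂) Φinv, hA, hA', hΦ, hΦ',
    blockMap_comp_schurBlockInverse hA hΦ, schurBlockInverse_comp_blockMap hA' hΦ',
    fun x y => ?_, ?_⟩
  · rw [hadj, sub_eq_add_neg]
    rfl
  · calc _ ≤ _ := norm_schurBlockInverse_le _ _ _ _
      _ ≤ δ⁻¹ + δ⁻¹ * m * (δ⁻¹ * (δ⁻¹ * m)) + δ⁻¹ * m * δ⁻¹ + δ⁻¹ * (δ⁻¹ * m) + δ⁻¹ := by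
        rw [← hadj, adjoint.norm_map]
        gcongr
      _ = _ := by field_simp; ring

/-- Operator-theoretic core of Theorem 3.3 and Proposition 3.5: the block operator `M`
is boundedly invertible, with inverse given by the Schur-complement block formula, and
`‖M⁻¹‖ ≤ 2/δ + 2‖M‖/δ² + ‖M‖²/δ³`. -/
theorem hilbert_block_inverse
    (δ : ℝ) (hδ : 0 < δ)
    (M₁₁ : H₁ →L[ℝ] H₁) (M₂₂ : H₂ →L[ℝ] H₂) (M₁₂ : H₂ →L[ℝ] H₁)
    (h₁₁sa : IsSelfAdjoint M₁₁) (h₂₂sa : IsSelfAdjoint M₂₂)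
    (h₁₁ : ∀ u : H₁, δ * ‖u‖ ^ 2 ≤ ⟪M₁₁ u, u⟫)
    (h₂₂ : ∀ v : H₂, ⟪M₂₂ v, v⟫ ≤ -δ * ‖v‖ ^ 2) :
    ∃ (M₁₁inv : H₁ →L[ℝ] H₁) (Φinv : H₂ →L[ℝ] H₂)
      (Minv : WithLp 2 (H₁ × H₂) →L[ℝ] WithLp 2 (H₁ × H₂)),
      M₁₁.comp M₁₁inv = ContinuousLinearMap.id ℝ H₁ ∧
      M₁₁inv.comp M₁₁ = ContinuousLinearMap.id ℝ H₁ ∧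
      (M₂₂ - (ContinuousLinearMap.adjoint M₁₂).comp (M₁₁inv.comp M₁₂)).comp Φinv
        = ContinuousLinearMap.id ℝ H₂ ∧
      Φinv.comp (M₂₂ - (ContinuousLinearMap.adjoint M₁₂).comp (M₁₁inv.comp M₁₂))
        = ContinuousLinearMap.id ℝ H₂ ∧
      (blockOp M₁₁ M₂₂ M₁₂).comp Minv = ContinuousLinearMap.id ℝ (WithLp 2 (H₁ × H₂)) ∧
      Minv.comp (blockOp M₁₁ M₂₂ M₁₂) = ContinuousLinearMap.id ℝ (WithLp 2 (H₁ × H₂)) ∧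
      (∀ (x : H₁) (y : H₂),
        Minv (pairL2 x y) =
          pairL2
            ((M₁₁inv
                + (M₁₁inv.comp M₁₂).comp
                    (Φinv.comp (ContinuousLinearMap.adjoint (M₁₁inv.comp M₁₂)))) x
              - ((M₁₁inv.comp M₁₂).comp Φinv) y)
            (-(Φinv ((ContinuousLinearMap.adjoint (M₁₁inv.comp M₁₂)) x)) + Φinv y)) ∧
      ‖Minv‖ ≤ 2 / δ + 2 * ‖blockOp M₁₁ M₂₂ M₁₂‖ / δ ^ 2
        + ‖blockOp M₁₁ M₂₂ M₁₂‖ ^ 2 / δ ^ 3 :=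
  hilbert_block_inverse_general δ hδ M₁₁ M₂₂ M₁₂ h₁₁sa h₁₁ h₂₂
end

section
/- Let H₁ and H₂ be real Hilbert spaces and δ > 0. Let M₁₁ : H₁ → H₁ and M₂₂ : H₂ → H₂ be bounded self-adjoint linear operators with ⟨M₁₁u, u⟩ ≥ δ‖u‖² for all u ∈ H₁ and ⟨M₂₂v, v⟩ ≤ −δ‖v‖² for all v ∈ H₂, and let M₁₂ : H₂ → H₁ be a bounded linear operator with adjoint M₁₂* : H₁ → H₂. Define M on H := H₁ × H₂ by M(u, v) := (M₁₁u + M₁₂v, M₁₂*u + M₂₂v). Let k ∈ H and c ∈ ℝ, and define J : H → ℝ by J(w) := ⟨Mw, w⟩ + 2⟨k, w⟩ + c. Then there exists a unique pair (ū, v̄) ∈ H such that J(ū, v) ≤ J(ū, v̄) ≤ J(u, v̄) for all u ∈ H₁ and v ∈ H₂, and it is given by (ū, v̄) = −M⁻¹k. -/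
open scoped RealInnerProductSpace
open ContinuousLinearMap

variable {H₁ H₂ : Type*}
  [NormedAddCommGroup H₁] [InnerProductSpace ℝ H₁] [CompleteSpace H₁]
  [NormedAddCommGroup H₂] [InnerProductSpace ℝ H₂] [CompleteSpace H₂]

/-- The quadratic functional `J(w) = ⟨Mw, w⟩ + 2⟨k, w⟩ + c` on the Hilbert space `H₁ × H₂`. -/
noncomputable def quadJ (M : WithLp 2 (H₁ × H₂) →L[ℝ] WithLp 2 (H₁ × H₂))
    (k : WithLp 2 (H₁ × H₂)) (c : ℝ) (w : WithLp 2 (H₁ × H₂)) : ℝ :=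
  ⟪M w, w⟫ + 2 * ⟪k, w⟫ + c

/-- `w = (ū, v̄)` is a saddle point of `J`: `J(ū, v) ≤ J(ū, v̄) ≤ J(u, v̄)` for all `u, v`. -/
def IsSaddle (J : WithLp 2 (H₁ × H₂) → ℝ) (w : WithLp 2 (H₁ × H₂)) : Prop :=
  ∀ (u : H₁) (v : H₂),
    J (pairL2 ((WithLp.equiv 2 (H₁ × H₂)) w).1 v) ≤ J w ∧
    J w ≤ J (pairL2 u ((WithLp.equiv 2 (H₁ × H₂)) w).2)

/-! The flip `T (u, v) = (u, -v)` makes `T ∘ M` coercive, since the off-diagonal blocks cancel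
in `⟪T (M w), w⟫ = ⟪M₁₁ u, u⟫ - ⟪M₂₂ v, v⟫ ≥ δ ‖w‖²`; by Lax–Milgram `T ∘ M`, hence `M`, is
invertible. As `M` is self-adjoint, `J (w + h) = J w + 2 ⟪M w + k, h⟫ + ⟪M h, h⟫`. Moving only
`u` the quadratic term is `⟪M₁₁ h, h⟫ ≥ 0`, moving only `v` it is `⟪M₂₂ h, h⟫ ≤ 0`, so `w` is a
saddle point iff the linear term vanishes in both directions, i.e. iff `M w + k = 0`. -/

section InnerProductSpace

variable {E : Type*} [NormedAddCommGroup E] [InnerProductSpace ℝ E]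

theorem eq_zero_of_forall_nonneg_two_inner_add_inner (A : E →L[ℝ] E) {g : E}
    (h : ∀ a, 0 ≤ 2 * ⟪g, a⟫ + ⟪A a, a⟫) : g = 0 := by
  have hdiscrim : discrim ⟪A g, g⟫ (2 * ‖g‖ ^ 2) 0 ≤ 0 := discrim_le_zero fun t => by
    have := h (t • g)
    simp only [inner_smul_left, inner_smul_right, map_smul, real_inner_self_eq_norm_sq,
      conj_trivial] at this
    linarith
  have hg : (2 * ‖g‖ ^ 2) ^ 2 = 0 := le_antisymm (by simpa [discrim] using hdiscrim) (sq_nonneg _)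
  simpa using hg

theorem ContinuousLinearMap.isUnit_of_coercive [CompleteSpace E] {A : E →L[ℝ] E} {C : ℝ}
    (hC : 0 < C) (hA : ∀ u, C * ‖u‖ ^ 2 ≤ ⟪A u, u⟫) : IsUnit A := by
  have hB : IsCoercive ((innerSL ℝ).comp A) :=
    ⟨C, hC, fun u => by simpa [sq, mul_assoc] using hA u⟩
  have hLM : (hB.continuousLinearEquivOfBilin : E →L[ℝ] E) = A := by
    ext u
    exact ext_inner_right ℝ fun v => hB.continuousLinearEquivOfBilin_apply u v
  exact hLM ▸ ⟨hB.continuousLinearEquivOfBilin.toUnit, rfl⟩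

end InnerProductSpace

theorem ContinuousLinearMap.units_apply_add_eq_zero_iff {R M : Type*} [Ring R] [TopologicalSpace M]
    [AddCommGroup M] [IsTopologicalAddGroup M] [Module R M] (U : (M →L[R] M)ˣ) (w k : M) :
    (U : M →L[R] M) w + k = 0 ↔ w = -((↑U⁻¹ : M →L[R] M) k) := by
  have hinvU (x : M) : (↑U⁻¹ : M →L[R] M) ((U : M →L[R] M) x) = x :=
    DFunLike.congr_fun U.inv_mul x
  have hUinv (x : M) : (U : M →L[R] M) ((↑U⁻¹ : M →L[R] M) x) = x :=
    DFunLike.congr_fun U.mul_inv x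
  constructor
  · intro h
    rw [← hinvU w, add_eq_zero_iff_eq_neg.mp h, map_neg]
  · rintro rfl
    rw [map_neg, hUinv, neg_add_cancel]

section Pairs

variable {α β : Type*}

@[simp] theorem pairL2_fst (u : α) (v : β) : (pairL2 u v).fst = u := rfl

@[simp] theorem pairL2_snd (u : α) (v : β) : (pairL2 u v).snd = v := rfl

theorem add_pairL2 [AddCommGroup α] [AddCommGroup β] (w : WithLp 2 (α × β)) (a : α) (b : β) :
    w + pairL2 a b = pairL2 (w.fst + a) (w.snd + b) := rfl

theorem isSaddle_iff_forall_add [AddCommGroup α] [AddCommGroup β] (J : WithLp 2 (α × β) → ℝ)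
    (w : WithLp 2 (α × β)) :
    IsSaddle J w ↔ (∀ a : α, J w ≤ J (w + pairL2 a 0)) ∧ ∀ b : β, J (w + pairL2 0 b) ≤ J w := by
  constructor
  · intro hw
    exact ⟨fun a => by simpa [add_pairL2] using (hw (w.fst + a) 0).2,
      fun b => by simpa [add_pairL2] using (hw 0 (w.snd + b)).1⟩
  · rintro ⟨hfst, hsnd⟩ u v
    exact ⟨by simpa [add_pairL2] using hsnd (v - w.snd),
      by simpa [add_pairL2] using hfst (u - w.fst)⟩

end Pairs

theorem quadJ_add {E F : Type*} [NormedAddCommGroup E] [InnerProductSpace ℝ E]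
    [NormedAddCommGroup F] [InnerProductSpace ℝ F] {M : WithLp 2 (E × F) →L[ℝ] WithLp 2 (E × F)}
    (hM : (M : WithLp 2 (E × F) →ₗ[ℝ] WithLp 2 (E × F)).IsSymmetric) (k : WithLp 2 (E × F))
    (c : ℝ) (w h : WithLp 2 (E × F)) :
    quadJ M k c (w + h) = quadJ M k c w + 2 * ⟪M w + k, h⟫ + ⟪M h, h⟫ := by
  have hMhw : ⟪M h, w⟫ = ⟪M w, h⟫ := by rw [hM.apply_clm, real_inner_comm]
  simp only [quadJ, map_add, inner_add_left, inner_add_right, hMhw]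
  ring

section BlockOperator

variable {M₁₁ : H₁ →L[ℝ] H₁} {M₂₂ : H₂ →L[ℝ] H₂} (M₁₂ : H₂ →L[ℝ] H₁)

@[simp] theorem blockOp_apply_fst (w : WithLp 2 (H₁ × H₂)) :
    (blockOp M₁₁ M₂₂ M₁₂ w).fst = M₁₁ w.fst + M₁₂ w.snd := rfl

@[simp] theorem blockOp_apply_snd (w : WithLp 2 (H₁ × H₂)) :
    (blockOp M₁₁ M₂₂ M₁₂ w).snd = adjoint M₁₂ w.fst + M₂₂ w.snd := rfl

theorem isSelfAdjoint_blockOp (h₁₁ : IsSelfAdjoint M₁₁) (h₂₂ : IsSelfAdjoint M₂₂) :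
    IsSelfAdjoint (blockOp M₁₁ M₂₂ M₁₂) := by
  refine isSelfAdjoint_iff_isSymmetric.mpr fun w z => ?_
  simp only [coe_coe, WithLp.prod_inner_apply, WithLp.ofLp_fst, WithLp.ofLp_snd, blockOp_apply_fst,
    blockOp_apply_snd, inner_add_left, inner_add_right, adjoint_inner_left, adjoint_inner_right,
    h₁₁.isSymmetric.apply_clm, h₂₂.isSymmetric.apply_clm]
  ring

theorem isUnit_blockOp {δ : ℝ} (hδ : 0 < δ) (h₁₁ : ∀ u : H₁, δ * ‖u‖ ^ 2 ≤ ⟪M₁₁ u, u⟫)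
    (h₂₂ : ∀ v : H₂, ⟪M₂₂ v, v⟫ ≤ -δ * ‖v‖ ^ 2) : IsUnit (blockOp M₁₁ M₂₂ M₁₂) := by
  set T := blockOp (1 : H₁ →L[ℝ] H₁) (-1 : H₂ →L[ℝ] H₂) 0
  have hT : T * T = 1 := by ext w : 1; rw [WithLp.ext_iff]; ext <;> simp [T]
  have hTM : IsUnit (T * blockOp M₁₁ M₂₂ M₁₂) := isUnit_of_coercive hδ fun w => by
    have hTM_inner :
        ⟪(T * blockOp M₁₁ M₂₂ M₁₂) w, w⟫ = ⟪M₁₁ w.fst, w.fst⟫ - ⟪M₂₂ w.snd, w.snd⟫ := by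
      simp only [T, mul_apply_eq_comp, one_apply_eq_self, zero_apply, neg_apply, map_zero,
        WithLp.prod_inner_apply, WithLp.ofLp_fst, WithLp.ofLp_snd, blockOp_apply_fst,
        blockOp_apply_snd, add_zero, zero_add, neg_add_rev, inner_add_left, inner_neg_left,
        adjoint_inner_left, real_inner_comm]
      ring
    rw [hTM_inner, WithLp.prod_norm_sq_eq_of_L2]
    linarith [h₁₁ w.fst, h₂₂ w.snd]
  simpa [← mul_assoc, hT] using IsUnit.mul ⟨⟨T, T, hT, hT⟩, rfl⟩ hTM

theorem isSaddle_quadJ_blockOp_iff (h₁₁sa : IsSelfAdjoint M₁₁) (h₂₂sa : IsSelfAdjoint M₂₂)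
    (h₁₁ : ∀ u : H₁, 0 ≤ ⟪M₁₁ u, u⟫) (h₂₂ : ∀ v : H₂, ⟪M₂₂ v, v⟫ ≤ 0)
    (k : WithLp 2 (H₁ × H₂)) (c : ℝ) (w : WithLp 2 (H₁ × H₂)) :
    IsSaddle (quadJ (blockOp M₁₁ M₂₂ M₁₂) k c) w ↔ blockOp M₁₁ M₂₂ M₁₂ w + k = 0 := by
  simp only [isSaddle_iff_forall_add, quadJ_add (isSelfAdjoint_blockOp M₁₂ h₁₁sa h₂₂sa).isSymmetric]
  generalize blockOp M₁₁ M₂₂ M₁₂ w + k = g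
  simp only [WithLp.prod_inner_apply, WithLp.ofLp_fst, WithLp.ofLp_snd, pairL2_fst, pairL2_snd,
    blockOp_apply_fst, blockOp_apply_snd, map_zero, add_zero, zero_add, inner_zero_right,
    add_assoc, le_add_iff_nonneg_right, add_le_iff_nonpos_right]
  constructor
  · rintro ⟨hfst, hsnd⟩
    have hg₁ : g.fst = 0 := eq_zero_of_forall_nonneg_two_inner_add_inner M₁₁ hfst
    have hg₂ : -g.snd = 0 := eq_zero_of_forall_nonneg_two_inner_add_inner (-M₂₂) fun b => by
      simp only [inner_neg_left, neg_apply]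
      linarith [hsnd b]
    rw [WithLp.ext_iff]
    ext
    · simpa using hg₁
    · simpa using hg₂
  · rintro rfl
    simp [h₁₁, h₂₂]

end BlockOperator

/-- Abstract content of Theorem 3.3: existence and uniqueness of the saddle point of
`J(w) = ⟨Mw, w⟩ + 2⟨k, w⟩ + c`, given explicitly by `-M⁻¹ k`. -/
theorem saddle_point_exists_unique
    (δ : ℝ) (hδ : 0 < δ)
    (M₁₁ : H₁ →L[ℝ] H₁) (M₂₂ : H₂ →L[ℝ] H₂) (M₁₂ : H₂ →L[ℝ] H₁)
    (h₁₁sa : IsSelfAdjoint M₁₁) (h₂₂sa : IsSelfAdjoint M₂₂)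
    (h₁₁ : ∀ u : H₁, δ * ‖u‖ ^ 2 ≤ ⟪M₁₁ u, u⟫)
    (h₂₂ : ∀ v : H₂, ⟪M₂₂ v, v⟫ ≤ -δ * ‖v‖ ^ 2)
    (k : WithLp 2 (H₁ × H₂)) (c : ℝ) :
    ∃ Minv : WithLp 2 (H₁ × H₂) →L[ℝ] WithLp 2 (H₁ × H₂),
      (blockOp M₁₁ M₂₂ M₁₂).comp Minv = ContinuousLinearMap.id ℝ (WithLp 2 (H₁ × H₂)) ∧
      Minv.comp (blockOp M₁₁ M₂₂ M₁₂) = ContinuousLinearMap.id ℝ (WithLp 2 (H₁ × H₂)) ∧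
      (∃! w : WithLp 2 (H₁ × H₂), IsSaddle (quadJ (blockOp M₁₁ M₂₂ M₁₂) k c) w) ∧
      (∀ w : WithLp 2 (H₁ × H₂),
        IsSaddle (quadJ (blockOp M₁₁ M₂₂ M₁₂) k c) w → w = -(Minv k)) := by
  obtain ⟨U, hU⟩ := isUnit_blockOp M₁₂ hδ h₁₁ h₂₂
  have h₁₁_nonneg (u : H₁) : 0 ≤ ⟪M₁₁ u, u⟫ := (by positivity : 0 ≤ δ * ‖u‖ ^ 2).trans (h₁₁ u)
  have h₂₂_nonpos (v : H₂) : ⟪M₂₂ v, v⟫ ≤ 0 := (h₂₂ v).trans (by nlinarith [sq_nonneg ‖v‖])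
  have hsaddle (w : WithLp 2 (H₁ × H₂)) :
      IsSaddle (quadJ (blockOp M₁₁ M₂₂ M₁₂) k c) w ↔ w = -((↑U⁻¹ : _ →L[ℝ] _) k) := by
    rw [isSaddle_quadJ_blockOp_iff M₁₂ h₁₁sa h₂₂sa h₁₁_nonneg h₂₂_nonpos, ← hU,
      units_apply_add_eq_zero_iff]
  refine ⟨↑U⁻¹, hU ▸ U.mul_inv, hU ▸ U.inv_mul, ⟨_, (hsaddle _).mpr rfl, fun w => (hsaddle w).mp⟩,
    fun w => (hsaddle w).mp⟩
end

section
/- Fix positive integers n and m. Let A, C ∈ ℝ^{n×n}, B, D ∈ ℝ^{n×m}, Q ∈ ℝ^{n×n} symmetric, S ∈ ℝ^{m×n}, and R ∈ ℝ^{m×m} symmetric. Suppose the symmetric matrix P ∈ ℝ^{n×n} satisfies R + DᵀPD invertible and the algebraic Riccati equation PA + AᵀP + CᵀPC + Q − (PB + CᵀPD + Sᵀ)(R + DᵀPD)⁻¹(BᵀP + DᵀPC + S) = 0, and set Θ := −(R + DᵀPD)⁻¹(BᵀP + DᵀPC + S). Let T > 0 and let P_T : [0,T] → ℝ^{n×n}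 be differentiable with symmetric values, R + DᵀP_T(t)D invertible for all t ∈ [0,T], and satisfying P_T′(t) + P_T(t)A + AᵀP_T(t) + CᵀP_T(t)C + Q − (P_T(t)B + CᵀP_T(t)D + Sᵀ)(R + DᵀP_T(t)D)⁻¹(BᵀP_T(t) + DᵀP_T(t)C + S) = 0 on [0,T]. Set Θ_T(t) := −(R + DᵀP_T(t)D)⁻¹(BᵀP_T(t) + DᵀP_T(t)C + S) and Σ(t) := P − P_T(t). Then for all t ∈ [0,T]: (i) Θ − Θ_T(t) = −(R + DᵀP_T(t)D)⁻¹[BᵀΣ(t) + DᵀΣ(t)(C + DΘ)]; and (ii) Σ′(t) + Σ(t)(A + BΘ) + (A + BΘ)ᵀΣ(t) + (C + DΘ)ᵀΣ(t)(C + DΘ) + (Θ − Θ_T(t))ᵀ(R + DᵀP_T(t)D)(Θ − Θ_T(t)) = 0. -/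
/-! Write `G(X) = R + DᵀXD`, `M(X) = BᵀX + DᵀXC + S` and `Θ_X = -G(X)⁻¹M(X)`. For symmetric `X`,
completing the square shows that for every gain `K` the Riccati operator at `X` is the closed-loop
Lyapunov operator of `K` at `X`, plus a term depending only on `K`, minus
`(K - Θ_X)ᵀ G(X) (K - Θ_X)`. Taking `K = Θ_P` at `X = P` and at `X = P_T(t)` and subtracting, the
`K`-terms cancel and the Lyapunov operator is linear in `X`, which gives (ii). Identity (i) is
`G(P_T) (Θ_P - Θ_{P_T}) = M(P_T) - M(P) - Dᵀ(P - P_T) D Θ_P`. -/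

open Matrix Set

attribute [local instance] Matrix.normedAddCommGroup Matrix.normedSpace

section Riccati

variable {n m α : Type*} [Fintype n] [Fintype m] [CommRing α]
  {A C Q X Y : Matrix n n α} {B D : Matrix n m α} {R : Matrix m m α} {S : Matrix m n α}

def closedLoopLyapunov (A : Matrix n n α) (B : Matrix n m α) (C : Matrix n n α)
    (D : Matrix n m α) (K : Matrix m n α) (X : Matrix n n α) : Matrix n n α :=
  X * (A + B * K) + (A + B * K)ᵀ * X + (C + D * K)ᵀ * X * (C + D * K)

theorem closedLoopLyapunov_sub (K : Matrix m n α) (X Y : Matrix n n α) :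
    closedLoopLyapunov A B C D K (X - Y)
      = closedLoopLyapunov A B C D K X - closedLoopLyapunov A B C D K Y := by
  simp only [closedLoopLyapunov, Matrix.sub_mul, Matrix.mul_sub]
  abel

variable [DecidableEq m]

noncomputable def riccatiGain (B : Matrix n m α) (C : Matrix n n α) (D : Matrix n m α)
    (R : Matrix m m α) (S : Matrix m n α) (X : Matrix n n α) : Matrix m n α :=
  -(R + Dᵀ * X * D)⁻¹ * (Bᵀ * X + Dᵀ * X * C + S)

noncomputable def riccatiOperator (A : Matrix n n α) (B : Matrix n m α) (C : Matrix n n α)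
    (D : Matrix n m α) (Q : Matrix n n α) (R : Matrix m m α) (S : Matrix m n α)
    (X : Matrix n n α) : Matrix n n α :=
  X * A + Aᵀ * X + Cᵀ * X * C + Q
    - (X * B + Cᵀ * X * D + Sᵀ) * (R + Dᵀ * X * D)⁻¹ * (Bᵀ * X + Dᵀ * X * C + S)

theorem riccatiOperator_eq_add_mul_riccatiGain :
    riccatiOperator A B C D Q R S X
      = X * A + Aᵀ * X + Cᵀ * X * C + Q
        + (X * B + Cᵀ * X * D + Sᵀ) * riccatiGain B C D R S X := by
  rw [riccatiOperator, riccatiGain, Matrix.neg_mul, Matrix.mul_neg, ← Matrix.mul_assoc,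
    sub_eq_add_neg]

theorem mul_riccatiGain (hG : IsUnit (R + Dᵀ * X * D)) :
    (R + Dᵀ * X * D) * riccatiGain B C D R S X = -(Bᵀ * X + Dᵀ * X * C + S) := by
  rw [riccatiGain, Matrix.neg_mul, Matrix.mul_neg, ← Matrix.mul_assoc, Matrix.mul_nonsing_inv _
    ((Matrix.isUnit_iff_isUnit_det _).mp hG), Matrix.one_mul]

theorem riccatiGain_transpose_mul (hR : R.IsSymm) (hX : X.IsSymm)
    (hG : IsUnit (R + Dᵀ * X * D)) :
    (riccatiGain B C D R S X)ᵀ * (R + Dᵀ * X * D) = -(X * B + Cᵀ * X * D + Sᵀ) := by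
  have hGsymm : (R + Dᵀ * X * D)ᵀ = R + Dᵀ * X * D := by
    rw [transpose_add, hR.eq, transpose_mul, transpose_mul, transpose_transpose, hX.eq,
      Matrix.mul_assoc]
  rw [← hGsymm, ← transpose_mul, mul_riccatiGain hG]
  simp only [transpose_neg, transpose_add, transpose_mul, transpose_transpose, hX.eq,
    Matrix.mul_assoc]

theorem riccatiOperator_eq_closedLoopLyapunov_sub (hR : R.IsSymm) (hX : X.IsSymm)
    (hG : IsUnit (R + Dᵀ * X * D)) (K : Matrix m n α) :
    riccatiOperator A B C D Q R S X
      = closedLoopLyapunov A B C D K X + (Q + Sᵀ * K + Kᵀ * S + Kᵀ * R * K)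
        - (K - riccatiGain B C D R S X)ᵀ * (R + Dᵀ * X * D) * (K - riccatiGain B C D R S X) := by
  set Θ := riccatiGain B C D R S X
  have hsq : (K - Θ)ᵀ * (R + Dᵀ * X * D) * (K - Θ)
      = Kᵀ * ((R + Dᵀ * X * D) * K) + Kᵀ * (Bᵀ * X + Dᵀ * X * C + S)
        + (X * B + Cᵀ * X * D + Sᵀ) * K - (X * B + Cᵀ * X * D + Sᵀ) * Θ := by
    have hG₁ := mul_riccatiGain (B := B) (C := C) (S := S) hG
    have hG₂ := riccatiGain_transpose_mul (B := B) (C := C) (S := S) hR hX hG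
    rw [transpose_sub, Matrix.sub_mul, hG₂, Matrix.sub_mul, Matrix.mul_sub, Matrix.mul_sub,
      Matrix.mul_assoc Kᵀ, Matrix.mul_assoc Kᵀ, hG₁]
    simp only [Matrix.neg_mul, Matrix.mul_neg]
    abel
  rw [hsq, riccatiOperator_eq_add_mul_riccatiGain, closedLoopLyapunov]
  simp only [transpose_add, transpose_mul, Matrix.mul_add, Matrix.add_mul, Matrix.mul_assoc]
  abel

theorem riccatiOperator_sub (hR : R.IsSymm) (hX : X.IsSymm) (hY : Y.IsSymm)
    (hGX : IsUnit (R + Dᵀ * X * D)) (hGY : IsUnit (R + Dᵀ * Y * D)) :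
    riccatiOperator A B C D Q R S X - riccatiOperator A B C D Q R S Y
      = closedLoopLyapunov A B C D (riccatiGain B C D R S X) (X - Y)
        + (riccatiGain B C D R S X - riccatiGain B C D R S Y)ᵀ * (R + Dᵀ * Y * D)
          * (riccatiGain B C D R S X - riccatiGain B C D R S Y) := by
  rw [riccatiOperator_eq_closedLoopLyapunov_sub hR hX hGX (riccatiGain B C D R S X),
    riccatiOperator_eq_closedLoopLyapunov_sub hR hY hGY (riccatiGain B C D R S X),
    closedLoopLyapunov_sub, sub_self, transpose_zero, Matrix.zero_mul, Matrix.zero_mul]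
  abel

theorem riccatiGain_sub (hGX : IsUnit (R + Dᵀ * X * D)) (hGY : IsUnit (R + Dᵀ * Y * D)) :
    riccatiGain B C D R S X - riccatiGain B C D R S Y
      = -(R + Dᵀ * Y * D)⁻¹
        * (Bᵀ * (X - Y) + Dᵀ * (X - Y) * (C + D * riccatiGain B C D R S X)) := by
  have hdiff : (R + Dᵀ * Y * D) * (riccatiGain B C D R S X - riccatiGain B C D R S Y)
      = -(Bᵀ * (X - Y) + Dᵀ * (X - Y) * (C + D * riccatiGain B C D R S X)) := by
    have hGX' : (R + Dᵀ * Y * D) * riccatiGain B C D R S X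
        = (R + Dᵀ * X * D) * riccatiGain B C D R S X
          - Dᵀ * (X - Y) * (D * riccatiGain B C D R S X) := by
      simp only [Matrix.add_mul, Matrix.sub_mul, Matrix.mul_sub, Matrix.mul_assoc]
      abel
    rw [Matrix.mul_sub, hGX', mul_riccatiGain hGX, mul_riccatiGain hGY]
    simp only [Matrix.mul_add, Matrix.sub_mul, Matrix.mul_sub, Matrix.mul_assoc]
    abel
  rw [Matrix.neg_mul, ← Matrix.mul_neg, ← hdiff, Matrix.nonsing_inv_mul_cancel_left _ _
    ((Matrix.isUnit_iff_isUnit_det _).mp hGY)]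

end Riccati

theorem riccati_difference_identities_general
    (n m : ℕ)
    (A C : Matrix (Fin n) (Fin n) ℝ) (B D : Matrix (Fin n) (Fin m) ℝ)
    (Q : Matrix (Fin n) (Fin n) ℝ)
    (S : Matrix (Fin m) (Fin n) ℝ)
    (R : Matrix (Fin m) (Fin m) ℝ) (hR : R.IsSymm)
    (P : Matrix (Fin n) (Fin n) ℝ) (hP : P.IsSymm)
    (hPinv : IsUnit (R + Dᵀ * P * D))
    (hARE : P * A + Aᵀ * P + Cᵀ * P * C + Q
      - (P * B + Cᵀ * P * D + Sᵀ) * (R + Dᵀ * P * D)⁻¹ * (Bᵀ * P + Dᵀ * P * C + S) = 0)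
    (Θ : Matrix (Fin m) (Fin n) ℝ)
    (hΘ : Θ = -(R + Dᵀ * P * D)⁻¹ * (Bᵀ * P + Dᵀ * P * C + S))
    (T : ℝ)
    (PT PT' : ℝ → Matrix (Fin n) (Fin n) ℝ)
    (hPTsym : ∀ t ∈ Set.Icc (0:ℝ) T, (PT t).IsSymm)
    (hPTinv : ∀ t ∈ Set.Icc (0:ℝ) T, IsUnit (R + Dᵀ * PT t * D))
    (hderiv : ∀ t ∈ Set.Icc (0:ℝ) T, HasDerivWithinAt PT (PT' t) (Set.Icc 0 T) t)
    (hRic : ∀ t ∈ Set.Icc (0:ℝ) T,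
      PT' t + PT t * A + Aᵀ * PT t + Cᵀ * PT t * C + Q
        - (PT t * B + Cᵀ * PT t * D + Sᵀ) * (R + Dᵀ * PT t * D)⁻¹
            * (Bᵀ * PT t + Dᵀ * PT t * C + S) = 0)
    (ΘT : ℝ → Matrix (Fin m) (Fin n) ℝ)
    (hΘT : ∀ t, ΘT t = -(R + Dᵀ * PT t * D)⁻¹ * (Bᵀ * PT t + Dᵀ * PT t * C + S))
    (Sig : ℝ → Matrix (Fin n) (Fin n) ℝ) (hSig : ∀ t, Sig t = P - PT t) :
    ∀ t ∈ Set.Icc (0:ℝ) T,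
      (Θ - ΘT t
        = -(R + Dᵀ * PT t * D)⁻¹ * (Bᵀ * Sig t + Dᵀ * Sig t * (C + D * Θ))) ∧
      (HasDerivWithinAt Sig (-(PT' t)) (Set.Icc 0 T) t ∧
        -(PT' t) + Sig t * (A + B * Θ) + (A + B * Θ)ᵀ * Sig t
          + (C + D * Θ)ᵀ * Sig t * (C + D * Θ)
          + (Θ - ΘT t)ᵀ * (R + Dᵀ * PT t * D) * (Θ - ΘT t) = 0) := by
  intro t ht
  have hΘ' : Θ = riccatiGain B C D R S P := hΘ
  have hΘT' : ΘT t = riccatiGain B C D R S (PT t) := hΘT t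
  have hARE' : riccatiOperator A B C D Q R S P = 0 := hARE
  have hRic' : riccatiOperator A B C D Q R S (PT t) = -(PT' t) := by
    rw [eq_neg_iff_add_eq_zero, ← hRic t ht, riccatiOperator]
    abel
  have hdiff := riccatiOperator_sub (A := A) (B := B) (C := C) (Q := Q) (S := S) hR hP
    (hPTsym t ht) hPinv (hPTinv t ht)
  rw [← hΘ', ← hΘT', hARE', hRic', zero_sub, neg_neg] at hdiff
  refine ⟨?_, funext hSig ▸ (hderiv t ht).const_sub P, ?_⟩
  · rw [hSig, hΘ', hΘT']
    exact riccatiGain_sub hPinv (hPTinv t ht)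
  · calc _ = -(PT' t) + closedLoopLyapunov A B C D Θ (Sig t)
            + (Θ - ΘT t)ᵀ * (R + Dᵀ * PT t * D) * (Θ - ΘT t) := by
          rw [closedLoopLyapunov]; abel
      _ = 0 := by rw [hSig, add_assoc, ← hdiff, neg_add_cancel]

/-- The 'direct computation' at the start of the proof of Theorem 4.6: with
`Sig(t) = P - P_T(t)` (whose derivative is `-P_T′(t)`), the difference between the
algebraic and differential Riccati solutions satisfies a perturbed Lyapunov equation. -/
theorem riccati_difference_identities
    (n m : ℕ) (hn : 0 < n) (hm : 0 < m)
    (A C : Matrix (Fin n) (Fin n) ℝ) (B D : Matrix (Fin n) (Fin m) ℝ)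
    (Q : Matrix (Fin n) (Fin n) ℝ) (hQ : Q.IsSymm)
    (S : Matrix (Fin m) (Fin n) ℝ)
    (R : Matrix (Fin m) (Fin m) ℝ) (hR : R.IsSymm)
    (P : Matrix (Fin n) (Fin n) ℝ) (hP : P.IsSymm)
    (hPinv : IsUnit (R + Dᵀ * P * D))
    (hARE : P * A + Aᵀ * P + Cᵀ * P * C + Q
      - (P * B + Cᵀ * P * D + Sᵀ) * (R + Dᵀ * P * D)⁻¹ * (Bᵀ * P + Dᵀ * P * C + S) = 0)
    (Θ : Matrix (Fin m) (Fin n) ℝ)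
    (hΘ : Θ = -(R + Dᵀ * P * D)⁻¹ * (Bᵀ * P + Dᵀ * P * C + S))
    (T : ℝ) (hT : 0 < T)
    (PT PT' : ℝ → Matrix (Fin n) (Fin n) ℝ)
    (hPTsym : ∀ t ∈ Set.Icc (0:ℝ) T, (PT t).IsSymm)
    (hPTinv : ∀ t ∈ Set.Icc (0:ℝ) T, IsUnit (R + Dᵀ * PT t * D))
    (hderiv : ∀ t ∈ Set.Icc (0:ℝ) T, HasDerivWithinAt PT (PT' t) (Set.Icc 0 T) t)
    (hRic : ∀ t ∈ Set.Icc (0:ℝ) T,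
      PT' t + PT t * A + Aᵀ * PT t + Cᵀ * PT t * C + Q
        - (PT t * B + Cᵀ * PT t * D + Sᵀ) * (R + Dᵀ * PT t * D)⁻¹
            * (Bᵀ * PT t + Dᵀ * PT t * C + S) = 0)
    (ΘT : ℝ → Matrix (Fin m) (Fin n) ℝ)
    (hΘT : ∀ t, ΘT t = -(R + Dᵀ * PT t * D)⁻¹ * (Bᵀ * PT t + Dᵀ * PT t * C + S))
    (Sig : ℝ → Matrix (Fin n) (Fin n) ℝ) (hSig : ∀ t, Sig t = P - PT t) :
    ∀ t ∈ Set.Icc (0:ℝ) T,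
      (Θ - ΘT t
        = -(R + Dᵀ * PT t * D)⁻¹ * (Bᵀ * Sig t + Dᵀ * Sig t * (C + D * Θ))) ∧
      (HasDerivWithinAt Sig (-(PT' t)) (Set.Icc 0 T) t ∧
        -(PT' t) + Sig t * (A + B * Θ) + (A + B * Θ)ᵀ * Sig t
          + (C + D * Θ)ᵀ * Sig t * (C + D * Θ)
          + (Θ - ΘT t)ᵀ * (R + Dᵀ * PT t * D) * (Θ - ΘT t) = 0) :=
  riccati_difference_identities_general n m A C B D Q S R hR P hP hPinv hARE Θ hΘ T PT PT' hPTsym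
    hPTinv hderiv hRic ΘT hΘT Sig hSig
end

section
/- Let 0 < ρ < λ, K > 0 and T > 0, and set ψ(t) := e^{−λt} + e^{−λ(T−t)} for t ∈ [0,T]. Suppose f : [0,T] → ℝ is differentiable, f(t) ≥ 0 for all t, and f′(t) ≤ (−ρ + Kψ(t)) f(t) + Kψ(t) for all t ∈ [0,T]. Then f(t) ≤ e^{2K/λ} [ f(0) e^{−ρt} + K( e^{−ρt}/(λ−ρ) + e^{−λ(T−t)}/(λ+ρ) ) ] for all t ∈ [0,T]. -/
open Set Real intervalIntegral

/-!
Multiplying by the integrating factor `e^{-A}`, where `A' = -ρ + Kψ`, turns the differential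
inequality into `(f e^{-A})' ≤ Kψ e^{-A}`, so
`f(t) ≤ e^{A(t) - A(0)} f(0) + ∫₀ᵗ e^{A(t) - A(s)} Kψ(s) ds`.
Since `∫ₛᵗ ψ ≤ 2/λ` on `[0, T]`, the factor `e^{A(t) - A(s)}` is at most `e^{2K/λ} e^{-ρ(t-s)}`,
and the remaining convolution of `ψ` with `e^{-ρ·}` is computed explicitly.
-/

theorem le_exp_sub_mul_add_integral_of_hasDerivWithinAt
    {f f' a b A : ℝ → ℝ} {t₀ t₁ : ℝ}
    (hA : ∀ t, HasDerivAt A (a t) t) (hb : Continuous b)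
    (hf : ∀ t ∈ Icc t₀ t₁, HasDerivWithinAt f (f' t) (Icc t₀ t₁) t)
    (hf' : ∀ t ∈ Ioo t₀ t₁, f' t ≤ a t * f t + b t) :
    ∀ t ∈ Icc t₀ t₁, f t ≤ exp (A t - A t₀) * f t₀ + ∫ s in t₀..t, exp (A t - A s) * b s := by
  have hAc : Continuous A := continuous_iff_continuousAt.2 fun t => (hA t).continuousAt
  have hB : Continuous fun s => b s * exp (-A s) := hb.mul hAc.neg.rexp
  set g := fun t => f t * exp (-A t) - ∫ s in t₀..t, b s * exp (-A s)
  have hg : AntitoneOn g (Icc t₀ t₁) := by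
    have hfc : ContinuousOn f (Icc t₀ t₁) := fun t ht => (hf t ht).continuousWithinAt
    rw [← interior_Icc] at hf'
    refine antitoneOn_of_hasDerivWithinAt_nonpos (convex_Icc t₀ t₁)
      (f' := fun t => exp (-A t) * (f' t - (a t * f t + b t)))
      ((hfc.mul hAc.neg.rexp.continuousOn).sub
        (continuous_primitive (fun _ _ => hB.intervalIntegrable _ _) t₀).continuousOn)
      (fun t ht => ?_) (fun t ht => mul_nonpos_of_nonneg_of_nonpos (exp_pos _).le
        (sub_nonpos.2 (hf' t ht)))
    rw [interior_Icc] at ht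
    have hft : HasDerivAt f (f' t) t :=
      (hf t (Ioo_subset_Icc_self ht)).hasDerivAt (Icc_mem_nhds ht.1 ht.2)
    refine (((hft.mul (hA t).neg.exp).sub
      (hB.integral_hasStrictDerivAt t₀ t).hasDerivAt).congr_deriv ?_).hasDerivWithinAt
    simp only [Pi.neg_apply]
    ring
  intro t ht
  have hgt : g t ≤ g t₀ := hg ⟨le_rfl, ht.1.trans ht.2⟩ ht ht.1
  simp only [g, integral_same, sub_zero] at hgt
  have hexp : exp (A t) * ∫ s in t₀..t, b s * exp (-A s)
      = ∫ s in t₀..t, exp (A t - A s) * b s := by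
    rw [← integral_const_mul]
    refine integral_congr fun s _ => ?_
    simp only [exp_sub, exp_neg]
    ring
  calc f t = exp (A t) * (f t * exp (-A t)) := by rw [exp_neg]; field_simp
    _ ≤ exp (A t) * (f t₀ * exp (-A t₀) + ∫ s in t₀..t, b s * exp (-A s)) := by gcongr; linarith
    _ = _ := by rw [mul_add, hexp, exp_sub, exp_neg]; ring

theorem le_exp_mul_add_integral_of_hasDerivWithinAt_of_decay
    {f f' a b A : ℝ → ℝ} {t₀ t₁ C ρ : ℝ}
    (hA : ∀ t, HasDerivAt A (a t) t) (hb : Continuous b) (hb₀ : ∀ t ∈ Icc t₀ t₁, 0 ≤ b t)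
    (hdecay : ∀ s ∈ Icc t₀ t₁, ∀ t ∈ Icc s t₁, A t - A s ≤ C - ρ * (t - s))
    (hf : ∀ t ∈ Icc t₀ t₁, HasDerivWithinAt f (f' t) (Icc t₀ t₁) t)
    (hf' : ∀ t ∈ Ioo t₀ t₁, f' t ≤ a t * f t + b t) (hf₀ : 0 ≤ f t₀) :
    ∀ t ∈ Icc t₀ t₁,
      f t ≤ exp C * (f t₀ * exp (-ρ * (t - t₀)) + ∫ s in t₀..t, exp (-ρ * (t - s)) * b s) := by
  intro t ht
  have hdecay' : ∀ s ∈ Icc t₀ t, exp (A t - A s) ≤ exp C * exp (-ρ * (t - s)) := fun s hs => by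
    rw [← exp_add, exp_le_exp]
    linarith [hdecay s ⟨hs.1, hs.2.trans ht.2⟩ t ⟨hs.2, ht.2⟩]
  have hAc : Continuous A := continuous_iff_continuousAt.2 fun t => (hA t).continuousAt
  calc f t ≤ exp (A t - A t₀) * f t₀ + ∫ s in t₀..t, exp (A t - A s) * b s :=
        le_exp_sub_mul_add_integral_of_hasDerivWithinAt hA hb hf hf' t ht
    _ ≤ exp C * exp (-ρ * (t - t₀)) * f t₀ + ∫ s in t₀..t, exp C * (exp (-ρ * (t - s)) * b s) := by
        gcongr ?_ + ?_
        · exact mul_le_mul_of_nonneg_right (hdecay' t₀ ⟨le_rfl, ht.1⟩) hf₀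
        · refine integral_mono_on ht.1 (by apply Continuous.intervalIntegrable; fun_prop)
            (by apply Continuous.intervalIntegrable; fun_prop) fun s hs => ?_
          rw [← mul_assoc]
          exact mul_le_mul_of_nonneg_right (hdecay' s hs) (hb₀ s ⟨hs.1, hs.2.trans ht.2⟩)
    _ = _ := by rw [integral_const_mul]; ring

theorem integral_exp_mul {c : ℝ} (hc : c ≠ 0) (a b : ℝ) :
    ∫ s in a..b, exp (c * s) = (exp (c * b) - exp (c * a)) / c := by
  rw [integral_comp_mul_left exp hc, integral_exp, smul_eq_mul]
  field_simp

theorem integral_exp_mul_le_of_pos {c : ℝ} (hc : 0 < c) (a b : ℝ) :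
    ∫ s in a..b, exp (c * s) ≤ exp (c * b) / c := by
  rw [integral_exp_mul hc.ne']
  gcongr
  linarith [exp_pos (c * a)]

theorem integral_exp_mul_le_of_neg {c : ℝ} (hc : c < 0) (a b : ℝ) :
    ∫ s in a..b, exp (c * s) ≤ exp (c * a) / -c := by
  have hc' : 0 < -c := neg_pos.2 hc
  rw [integral_exp_mul hc.ne, ← neg_div_neg_eq, neg_sub]
  gcongr
  linarith [exp_pos (c * b)]

noncomputable def turnpikeWeight (lam T t : ℝ) : ℝ := exp (-lam * t) + exp (-lam * (T - t))

noncomputable def turnpikePrimitive (lam T t : ℝ) : ℝ :=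
  (exp (-lam * (T - t)) - exp (-lam * t)) / lam

theorem hasDerivAt_turnpikePrimitive {lam : ℝ} (hlam : lam ≠ 0) (T t : ℝ) :
    HasDerivAt (turnpikePrimitive lam T) (turnpikeWeight lam T t) t := by
  have h₁ : HasDerivAt (fun t => -lam * (T - t)) lam t := by
    simpa using ((hasDerivAt_id' t).const_sub T).const_mul (-lam)
  have h₂ : HasDerivAt (fun t => -lam * t) (-lam) t := by
    simpa using (hasDerivAt_id' t).const_mul (-lam)
  refine ((h₁.exp.sub h₂.exp).div_const lam).congr_deriv ?_
  unfold turnpikeWeight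
  field_simp
  ring

theorem turnpikePrimitive_sub_le {lam T s t : ℝ} (hlam : 0 < lam) (hs : 0 ≤ s) (ht : t ≤ T) :
    turnpikePrimitive lam T t - turnpikePrimitive lam T s ≤ 2 / lam := by
  have h₁ : exp (-lam * (T - t)) ≤ 1 := exp_le_one_iff.2 (by nlinarith)
  have h₂ : exp (-lam * s) ≤ 1 := exp_le_one_iff.2 (by nlinarith)
  unfold turnpikePrimitive
  rw [← sub_div]
  gcongr
  linarith [exp_pos (-lam * t), exp_pos (-lam * (T - s))]

theorem integral_exp_mul_turnpikeWeight_le {ρ lam T t : ℝ} (hρ : ρ < lam) (hρ' : -lam < ρ) :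
    ∫ s in 0..t, exp (-ρ * (t - s)) * turnpikeWeight lam T s
      ≤ exp (-ρ * t) / (lam - ρ) + exp (-lam * (T - t)) / (lam + ρ) := by
  have hsplit : ∀ s, exp (-ρ * (t - s)) * turnpikeWeight lam T s
      = exp (-ρ * t) * exp ((ρ - lam) * s) + exp (-ρ * t - lam * T) * exp ((ρ + lam) * s) := by
    intro s
    simp only [turnpikeWeight, mul_add, ← exp_add]
    ring_nf
  simp only [hsplit]
  rw [integral_add (by apply Continuous.intervalIntegrable; fun_prop)
    (by apply Continuous.intervalIntegrable; fun_prop), integral_const_mul, integral_const_mul]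
  have h₁ := integral_exp_mul_le_of_neg (sub_neg.2 hρ) 0 t
  have h₂ := integral_exp_mul_le_of_pos (show 0 < ρ + lam by linarith) 0 t
  calc exp (-ρ * t) * (∫ s in 0..t, exp ((ρ - lam) * s))
        + exp (-ρ * t - lam * T) * ∫ s in 0..t, exp ((ρ + lam) * s)
      ≤ exp (-ρ * t) * (exp ((ρ - lam) * 0) / -(ρ - lam))
        + exp (-ρ * t - lam * T) * (exp ((ρ + lam) * t) / (ρ + lam)) := by gcongr
    _ = _ := by
      rw [mul_zero, exp_zero, neg_sub, mul_one_div, mul_div_assoc', ← exp_add, add_comm ρ]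
      ring_nf

theorem gronwall_turnpike_general
    (ρ lam K T : ℝ) (hρ : 0 < ρ) (hρlam : ρ < lam) (hK : 0 < K)
    (f f' : ℝ → ℝ)
    (hderiv : ∀ t ∈ Set.Icc (0:ℝ) T, HasDerivWithinAt f (f' t) (Set.Icc 0 T) t)
    (hnonneg : ∀ t ∈ Set.Icc (0:ℝ) T, 0 ≤ f t)
    (hineq : ∀ t ∈ Set.Icc (0:ℝ) T,
      f' t ≤ (-ρ + K * (Real.exp (-lam * t) + Real.exp (-lam * (T - t)))) * f t
        + K * (Real.exp (-lam * t) + Real.exp (-lam * (T - t)))) :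
    ∀ t ∈ Set.Icc (0:ℝ) T,
      f t ≤ Real.exp (2 * K / lam)
        * (f 0 * Real.exp (-ρ * t)
          + K * (Real.exp (-ρ * t) / (lam - ρ)
            + Real.exp (-lam * (T - t)) / (lam + ρ))) := by
  intro t ht
  have hlam : 0 < lam := hρ.trans hρlam
  have hA : ∀ s, HasDerivAt (fun s => -ρ * s + K * turnpikePrimitive lam T s)
      (-ρ + K * turnpikeWeight lam T s) s := fun s => by
    refine (((hasDerivAt_id' s).const_mul (-ρ)).add
      ((hasDerivAt_turnpikePrimitive hlam.ne' T s).const_mul K)).congr_deriv ?_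
    ring
  have hdecay : ∀ s ∈ Icc 0 T, ∀ t ∈ Icc s T,
      -ρ * t + K * turnpikePrimitive lam T t - (-ρ * s + K * turnpikePrimitive lam T s)
        ≤ 2 * K / lam - ρ * (t - s) := fun s hs r hr => by
    have := mul_le_mul_of_nonneg_left (turnpikePrimitive_sub_le hlam hs.1 hr.2) hK.le
    rw [show 2 * K / lam = K * (2 / lam) by ring]
    linarith
  have key := le_exp_mul_add_integral_of_hasDerivWithinAt_of_decay hA
    (b := fun s => K * turnpikeWeight lam T s) (by unfold turnpikeWeight; fun_prop)
    (fun s _ => by unfold turnpikeWeight; positivity) hdecay hderiv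
    (fun s hs => hineq s (Ioo_subset_Icc_self hs)) (hnonneg 0 ⟨le_rfl, ht.1.trans ht.2⟩) t ht
  simp only [sub_zero, mul_left_comm _ K, integral_const_mul] at key
  grw [key, integral_exp_mul_turnpikeWeight_le hρlam (by linarith)]

/-- Gronwall-type estimate with turnpike forcing `ψ(t) = e^{-λt} + e^{-λ(T-t)}`,
the final step in the proof of Proposition 5.2. -/
theorem gronwall_turnpike
    (ρ lam K T : ℝ) (hρ : 0 < ρ) (hρlam : ρ < lam) (hK : 0 < K) (hT : 0 < T)
    (f f' : ℝ → ℝ)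
    (hderiv : ∀ t ∈ Set.Icc (0:ℝ) T, HasDerivWithinAt f (f' t) (Set.Icc 0 T) t)
    (hnonneg : ∀ t ∈ Set.Icc (0:ℝ) T, 0 ≤ f t)
    (hineq : ∀ t ∈ Set.Icc (0:ℝ) T,
      f' t ≤ (-ρ + K * (Real.exp (-lam * t) + Real.exp (-lam * (T - t)))) * f t
        + K * (Real.exp (-lam * t) + Real.exp (-lam * (T - t)))) :
    ∀ t ∈ Set.Icc (0:ℝ) T,
      f t ≤ Real.exp (2 * K / lam)
        * (f 0 * Real.exp (-ρ * t)
          + K * (Real.exp (-ρ * t) / (lam - ρ)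
            + Real.exp (-lam * (T - t)) / (lam + ρ))) :=
  gronwall_turnpike_general ρ lam K T hρ hρlam hK f f' hderiv hnonneg hineq
end

section
/- Let n be a positive integer and A ∈ ℝ^{n×n}. The following are equivalent: (i) for every x ∈ ℝⁿ, ∫₀^∞ ‖exp(tA) x‖² dt < ∞; (ii) there exist constants K, λ > 0 such that ‖exp(tA) x‖² ≤ K e^{−λt} ‖x‖² for all t ≥ 0 and all x ∈ ℝⁿ. -/
open Matrix MeasureTheory

/-- The Euclidean norm of a vector in `ℝⁿ`. -/
noncomputable def euclNorm {n : ℕ} (x : Fin n → ℝ) : ℝ :=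
  Real.sqrt (∑ i, (x i) ^ 2)

/-!
Integrability of `‖exp(tA)x‖²` for the basis vectors `x = eⱼ` makes `t ↦ ‖exp(tA)‖²` integrable
in the Frobenius norm, so `‖exp(TA)‖² < 1/2` for some `T ≥ 1`. Since `t ↦ ‖exp(tA)‖²` is
submultiplicative and bounded by some `B` on `[0, T]`, writing `t = kT + r` with `0 ≤ r < T` gives
`‖exp(tA)‖² ≤ 2⁻ᵏ B`, which is exponential decay. The converse is the integrability of `e^{-λt}`.
-/

open Set WithLp

theorem le_div_mul_rpow_of_submultiplicative {h : ℝ → ℝ} (h_nonneg : ∀ t, 0 ≤ t → 0 ≤ h t)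
    (h_mul : ∀ s t, 0 ≤ s → 0 ≤ t → h (s + t) ≤ h s * h t) {T B q : ℝ} (hT : 0 < T)
    (hB : ∀ r ∈ Ico 0 T, h r ≤ B) (hq : 0 < q) (hq1 : q ≤ 1) (hTq : h T ≤ q) {t : ℝ}
    (ht : 0 ≤ t) : h t ≤ B / q * q ^ (t / T) := by
  have h_iter : ∀ k : ℕ, ∀ r ∈ Ico 0 T, h (k * T + r) ≤ q ^ k * B := by
    intro k r hr
    induction k with
    | zero => simpa using hB r hr
    | succ k ih =>
      have hkr : 0 ≤ k * T + r := by have := hr.1; positivity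
      calc h ((k + 1 : ℕ) * T + r) = h (T + (k * T + r)) := by push_cast; ring_nf
        _ ≤ h T * h (k * T + r) := h_mul _ _ hT.le hkr
        _ ≤ q * (q ^ k * B) := mul_le_mul hTq ih (h_nonneg _ hkr) hq.le
        _ = q ^ (k + 1) * B := by ring
  set k := ⌊t / T⌋₊
  have hk_le : (k : ℝ) ≤ t / T := Nat.floor_le (div_nonneg ht hT.le)
  have hk_gt : t / T < k + 1 := Nat.lt_floor_add_one _
  have hr : t - k * T ∈ Ico 0 T := by
    rw [le_div_iff₀ hT] at hk_le
    rw [div_lt_iff₀ hT] at hk_gt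
    constructor <;> linarith
  have hB0 : 0 ≤ B := (h_nonneg 0 le_rfl).trans (hB 0 ⟨le_rfl, hT⟩)
  calc h t = h (k * T + (t - k * T)) := by ring_nf
    _ ≤ q ^ k * B := h_iter k _ hr
    _ = q ^ (k : ℝ) * B := by rw [Real.rpow_natCast]
    _ ≤ q ^ (t / T - 1) * B :=
      mul_le_mul_of_nonneg_right (Real.rpow_le_rpow_of_exponent_ge hq hq1 (by linarith)) hB0
    _ = B / q * q ^ (t / T) := by rw [Real.rpow_sub hq, Real.rpow_one]; ring

theorem exists_ge_lt_of_integrableOn_Ici {f : ℝ → ℝ} {a ε : ℝ} (hf : IntegrableOn f (Ici a))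
    (hε : 0 < ε) : ∃ t ≥ a, f t < ε := by
  by_contra! hge
  have : IntegrableOn (fun _ => ε) (Ici a) :=
    hf.mono' (by fun_prop) <| (ae_restrict_mem measurableSet_Ici).mono fun t ht => by
      rw [Real.norm_of_nonneg hε.le]; exact hge t ht
  simp [hε.ne'] at this

theorem integrableOn_Ici_of_norm_le_mul_exp_neg {E : Type*} [NormedAddCommGroup E] {f : ℝ → E}
    {a K lam : ℝ} (hf : ContinuousOn f (Ici a)) (hlam : 0 < lam)
    (hbound : ∀ t ≥ a, ‖f t‖ ≤ K * Real.exp (-lam * t)) : IntegrableOn f (Ici a) := by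
  have h_exp : IntegrableOn (fun t => K * Real.exp (-lam * t)) (Ici a) :=
    (integrableOn_Ici_iff_integrableOn_Ioi (by finiteness)).2
      ((exp_neg_integrableOn_Ioi a hlam).const_mul K)
  exact h_exp.mono' (hf.aestronglyMeasurable measurableSet_Ici)
    ((ae_restrict_mem measurableSet_Ici).mono hbound)

section NormedAlgebra

variable {𝔸 : Type*} [NormedRing 𝔸] [NormedAlgebra ℝ 𝔸] [CompleteSpace 𝔸]

theorem continuous_exp_smul (a : 𝔸) : Continuous fun t : ℝ => NormedSpace.exp (t • a) :=
  continuous_iff_continuousAt.2 fun t => (hasDerivAt_exp_smul_const a t).continuousAt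

theorem exp_add_smul (a : 𝔸) (s t : ℝ) :
    NormedSpace.exp ((s + t) • a) = NormedSpace.exp (s • a) * NormedSpace.exp (t • a) := by
  rw [add_smul, NormedSpace.exp_add_of_commute_of_mem_ball (𝕂 := ℝ)
    (((Commute.refl a).smul_left s).smul_right t)]
  all_goals exact (NormedSpace.expSeries_radius_eq_top ℝ 𝔸).symm ▸ edist_lt_top _ _

theorem exists_norm_exp_smul_sq_le_of_integrableOn (a : 𝔸)
    (ha : IntegrableOn (fun t : ℝ => ‖NormedSpace.exp (t • a)‖ ^ 2) (Ici 0)) :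
    ∃ K lam : ℝ, 0 < K ∧ 0 < lam ∧
      ∀ t, 0 ≤ t → ‖NormedSpace.exp (t • a)‖ ^ 2 ≤ K * Real.exp (-lam * t) := by
  set h : ℝ → ℝ := fun t => ‖NormedSpace.exp (t • a)‖ ^ 2
  have h_mul : ∀ s t, 0 ≤ s → 0 ≤ t → h (s + t) ≤ h s * h t := fun s t _ _ => by
    simp only [h, exp_add_smul, ← mul_pow]
    exact pow_le_pow_left₀ (norm_nonneg _) (norm_mul_le _ _) 2
  obtain ⟨T, hT, hhT⟩ := exists_ge_lt_of_integrableOn_Ici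
    (ha.mono_set (Ici_subset_Ici.2 zero_le_one)) (one_half_pos (α := ℝ))
  obtain ⟨C, hC⟩ := isCompact_Icc.exists_bound_of_continuousOn
    ((continuous_exp_smul a).norm.pow 2).continuousOn (s := Icc 0 T)
  have hB : ∀ r ∈ Ico 0 T, h r ≤ max C 1 := fun r hr =>
    (le_abs_self _).trans ((hC r (Ico_subset_Icc_self hr)).trans (le_max_left _ _))
  refine ⟨max C 1 / (1 / 2), Real.log 2 / T, by positivity, by positivity, fun t ht => ?_⟩
  calc h t ≤ max C 1 / (1 / 2) * (1 / 2) ^ (t / T) :=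
        le_div_mul_rpow_of_submultiplicative (fun _ _ => by positivity) h_mul (by linarith) hB
          one_half_pos (by norm_num) hhT.le ht
    _ = _ := by
        rw [Real.rpow_def_of_pos one_half_pos, one_div, Real.log_inv]
        ring_nf

end NormedAlgebra

section Frobenius

open scoped Matrix.Norms.Frobenius

variable {m n : Type*} [Fintype m] [Fintype n]

theorem Matrix.frobenius_norm_toLp_mulVec_le {𝕜 : Type*} [RCLike 𝕜] (M : Matrix m n 𝕜)
    (x : n → 𝕜) : ‖toLp 2 (M *ᵥ x)‖ ≤ ‖M‖ * ‖toLp 2 x‖ := by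
  simpa only [← frobenius_norm_replicateCol (ι := Unit), replicateCol_mulVec] using
    frobenius_norm_mul M (replicateCol Unit x)

theorem Matrix.frobenius_norm_sq_eq_sum_norm_mulVec_single_sq {α : Type*} [SeminormedRing α]
    [DecidableEq n] (M : Matrix m n α) :
    ‖M‖ ^ 2 = ∑ j, ‖toLp 2 (M *ᵥ Pi.single j 1)‖ ^ 2 := by
  rw [← frobenius_norm_transpose]
  change ‖toLp 2 fun j => toLp 2 fun i => M i j‖ ^ 2 = _
  simp [PiLp.norm_sq_eq_of_L2]

theorem Matrix.exists_norm_exp_smul_mulVec_sq_le_of_integrableOn [DecidableEq n] (A : Matrix n n ℝ)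
    (hA : ∀ x : n → ℝ,
      IntegrableOn (fun t : ℝ => ‖toLp 2 (NormedSpace.exp (t • A) *ᵥ x)‖ ^ 2) (Ici 0)) :
    ∃ K lam : ℝ, 0 < K ∧ 0 < lam ∧ ∀ t, 0 ≤ t → ∀ x : n → ℝ,
      ‖toLp 2 (NormedSpace.exp (t • A) *ᵥ x)‖ ^ 2 ≤ K * Real.exp (-lam * t) * ‖toLp 2 x‖ ^ 2 := by
  have h_int : IntegrableOn (fun t : ℝ => ‖NormedSpace.exp (t • A)‖ ^ 2) (Ici 0) := by
    simp only [frobenius_norm_sq_eq_sum_norm_mulVec_single_sq]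
    exact integrable_finsetSum _ fun j _ => hA (Pi.single j 1)
  obtain ⟨K, lam, hK, hlam, hdecay⟩ := exists_norm_exp_smul_sq_le_of_integrableOn A h_int
  refine ⟨K, lam, hK, hlam, fun t ht x => ?_⟩
  calc ‖toLp 2 (NormedSpace.exp (t • A) *ᵥ x)‖ ^ 2
      ≤ ‖NormedSpace.exp (t • A)‖ ^ 2 * ‖toLp 2 x‖ ^ 2 := by
        rw [← mul_pow]
        exact pow_le_pow_left₀ (norm_nonneg _) (frobenius_norm_toLp_mulVec_le _ _) 2
    _ ≤ K * Real.exp (-lam * t) * ‖toLp 2 x‖ ^ 2 := by gcongr; exact hdecay t ht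

theorem Matrix.integrableOn_norm_exp_smul_mulVec_sq_of_le [DecidableEq n] (A : Matrix n n ℝ)
    {K lam : ℝ} (hlam : 0 < lam) (hA : ∀ t, 0 ≤ t → ∀ x : n → ℝ,
      ‖toLp 2 (NormedSpace.exp (t • A) *ᵥ x)‖ ^ 2 ≤ K * Real.exp (-lam * t) * ‖toLp 2 x‖ ^ 2)
    (x : n → ℝ) :
    IntegrableOn (fun t : ℝ => ‖toLp 2 (NormedSpace.exp (t • A) *ᵥ x)‖ ^ 2) (Ici 0) := by
  have h_cont : Continuous fun t : ℝ => ‖toLp 2 (NormedSpace.exp (t • A) *ᵥ x)‖ ^ 2 :=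
    ((PiLp.continuous_toLp 2 _).comp
      ((continuous_exp_smul A).matrix_mulVec continuous_const)).norm.pow 2
  refine integrableOn_Ici_of_norm_le_mul_exp_neg (K := K * ‖toLp 2 x‖ ^ 2) h_cont.continuousOn
    hlam fun t ht => ?_
  rw [Real.norm_of_nonneg (sq_nonneg _), mul_right_comm]
  exact hA t ht x

end Frobenius

theorem euclNorm_eq_norm_toLp {n : ℕ} (x : Fin n → ℝ) : euclNorm x = ‖toLp 2 x‖ := by
  simp [euclNorm, EuclideanSpace.norm_eq]

theorem L2_stable_iff_exp_stable_general
    (n : ℕ) (A : Matrix (Fin n) (Fin n) ℝ) :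
    (∀ x : Fin n → ℝ,
        MeasureTheory.IntegrableOn
          (fun t : ℝ => (euclNorm (NormedSpace.exp (t • A) *ᵥ x)) ^ 2)
          (Set.Ici 0))
      ↔ ∃ K lam : ℝ, 0 < K ∧ 0 < lam ∧
          ∀ (t : ℝ), 0 ≤ t → ∀ x : Fin n → ℝ,
            (euclNorm (NormedSpace.exp (t • A) *ᵥ x)) ^ 2
              ≤ K * Real.exp (-lam * t) * (euclNorm x) ^ 2 := by
  simp only [euclNorm_eq_norm_toLp]
  exact ⟨A.exists_norm_exp_smul_mulVec_sq_le_of_integrableOn,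
    fun ⟨_, _, _, hlam, hA⟩ => A.integrableOn_norm_exp_smul_mulVec_sq_of_le hlam hA⟩

/-- Deterministic case of Corollary 3.3: square-integrability on `[0,∞)` of every
solution `t ↦ exp(tA)x` of `x′ = Ax` is equivalent to exponential stability:
`‖exp(tA)x‖² ≤ K e^{-λt} ‖x‖²`. -/
theorem L2_stable_iff_exp_stable
    (n : ℕ) (hn : 0 < n) (A : Matrix (Fin n) (Fin n) ℝ) :
    (∀ x : Fin n → ℝ,
        MeasureTheory.IntegrableOn
          (fun t : ℝ => (euclNorm (NormedSpace.exp (t • A) *ᵥ x)) ^ 2)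
          (Set.Ici 0))
      ↔ ∃ K lam : ℝ, 0 < K ∧ 0 < lam ∧
          ∀ (t : ℝ), 0 ≤ t → ∀ x : Fin n → ℝ,
            (euclNorm (NormedSpace.exp (t • A) *ᵥ x)) ^ 2
              ≤ K * Real.exp (-lam * t) * (euclNorm x) ^ 2 :=
  L2_stable_iff_exp_stable_general n A
end
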